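/- arXiv:1710.04058 — 5 statements merged into one kernel-verified Lean document; each statement's English description precedes it below -/
import Mathlib

section
/- For every n ≥ 2 there exists a unique unital ℂ-algebra homomorphism I_n : TL_n → TL_{n+1} satisfying I_n(e_i) = e_i for 1 ≤ i ≤ n-1, I_n(e_n) = (t^{1/4}e_n + t^{-1/4})e_{n+1}(t^{-1/4}e_n + t^{1/4}), I_n(ρ) = ρ(t^{-1/4}e_n + t^{1/4}), and I_n(ρ^{-1}) = (t^{1/4}e_n + t^{-1/4})ρ^{-1}. -/
noncomputable section

namespace SkeinTL

inductive TLgen (n : ℕ) : Type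
  | e : ZMod n → TLgen n
  | r : TLgen n
  | ri : TLgen n

abbrev FA (n : ℕ) : Type := FreeAlgebra ℂ (TLgen n)

def ef (n : ℕ) (i : ZMod n) : FA n := FreeAlgebra.ι ℂ (TLgen.e i)
def rf (n : ℕ) : FA n := FreeAlgebra.ι ℂ TLgen.r
def rif (n : ℕ) : FA n := FreeAlgebra.ι ℂ TLgen.ri

/-- The defining relations of the extended affine Temperley-Lieb algebra.
For `n = 2` the presentation is the special one (`ρ²e₁ = e₁`), for `n ≥ 3` the
general one (indices mod `n`). -/
inductive TLrel (t4 : ℂ) (n : ℕ) : FA n → FA n → Prop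
  | esq (i : ZMod n) :
      TLrel t4 n (ef n i * ef n i) ((-(t4 ^ 2 + t4⁻¹ ^ 2)) • ef n i)
  | rer (i : ZMod n) :
      TLrel t4 n (rf n * ef n i) (ef n (i + 1) * rf n)
  | rri : TLrel t4 n (rf n * rif n) 1
  | rir : TLrel t4 n (rif n * rf n) 1
  | comm (h : 3 ≤ n) (i j : ZMod n) (h1 : i - j ≠ 1) (h2 : i - j ≠ -1) :
      TLrel t4 n (ef n i * ef n j) (ef n j * ef n i)
  | eplus (h : 3 ≤ n) (i : ZMod n) :
      TLrel t4 n (ef n i * ef n (i + 1) * ef n i) (ef n i)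
  | eminus (h : 3 ≤ n) (i : ZMod n) :
      TLrel t4 n (ef n i * ef n (i - 1) * ef n i) (ef n i)
  | cyc (h : 3 ≤ n) :
      TLrel t4 n ((rf n * ef n 1) ^ (n - 1)) (rf n ^ n * (rf n * ef n 1))
  | two (h : n = 2) :
      TLrel t4 n (rf n * rf n * ef n 1) (ef n 1)

/-- The extended affine Temperley-Lieb algebra `TL_n` (for `n ≥ 2`). -/
abbrev TL (t4 : ℂ) (n : ℕ) : Type := RingQuot (TLrel t4 n)

/-- The generator `e_i` of `TL_n` (index mod `n`). -/
def E (t4 : ℂ) (n : ℕ) (i : ZMod n) : TL t4 n :=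
  RingQuot.mkAlgHom ℂ (TLrel t4 n) (ef n i)

/-- The generator `ρ` of `TL_n`. -/
def R (t4 : ℂ) (n : ℕ) : TL t4 n :=
  RingQuot.mkAlgHom ℂ (TLrel t4 n) (rf n)

/-- The generator `ρ⁻¹` of `TL_n`. -/
def Ri (t4 : ℂ) (n : ℕ) : TL t4 n :=
  RingQuot.mkAlgHom ℂ (TLrel t4 n) (rif n)

/-- The scalar `c` viewed in `TL_n`. -/
def Ct (t4 : ℂ) (n : ℕ) (c : ℂ) : TL t4 n := algebraMap ℂ (TL t4 n) c


/-- The defining conditions of the arc-insertion algebra map `I_n : TL_n → TL_{n+1}`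
(`n ≥ 2`): `I_n(e_i) = e_i` for `1 ≤ i ≤ n-1`,
`I_n(e_n) = (t^{1/4}e_n + t^{-1/4})e_{n+1}(t^{-1/4}e_n + t^{1/4})`,
`I_n(ρ) = ρ(t^{-1/4}e_n + t^{1/4})`, `I_n(ρ⁻¹) = (t^{1/4}e_n + t^{-1/4})ρ⁻¹`. -/
def InsCond (t4 : ℂ) (n : ℕ) (I : TL t4 n →ₐ[ℂ] TL t4 (n + 1)) : Prop :=
  (∀ i : ℕ, 1 ≤ i → i ≤ n - 1 →
      I (E t4 n (i : ZMod n)) = E t4 (n + 1) (i : ZMod (n + 1))) ∧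
  I (E t4 n (n : ZMod n)) =
    (t4 • E t4 (n + 1) (n : ZMod (n + 1)) + Ct t4 (n + 1) t4⁻¹) *
      E t4 (n + 1) ((n + 1 : ℕ) : ZMod (n + 1)) *
      (t4⁻¹ • E t4 (n + 1) (n : ZMod (n + 1)) + Ct t4 (n + 1) t4) ∧
  I (R t4 n) = R t4 (n + 1) * (t4⁻¹ • E t4 (n + 1) (n : ZMod (n + 1)) + Ct t4 (n + 1) t4) ∧
  I (Ri t4 n) = (t4 • E t4 (n + 1) (n : ZMod (n + 1)) + Ct t4 (n + 1) t4⁻¹) * Ri t4 (n + 1)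

/-! ### Auxiliary: relations in `TL t4 m` -/

section Rels
variable (t4 : ℂ) (m : ℕ)

lemma rel_Esq (i : ZMod m) :
    E t4 m i * E t4 m i = (-(t4 ^ 2 + t4⁻¹ ^ 2)) • E t4 m i := by
  have h := RingQuot.mkAlgHom_rel ℂ (TLrel.esq (t4 := t4) (n := m) i)
  simpa only [map_mul, map_smul, E] using h

lemma rel_Rer (i : ZMod m) : R t4 m * E t4 m i = E t4 m (i + 1) * R t4 m := by
  have h := RingQuot.mkAlgHom_rel ℂ (TLrel.rer (t4 := t4) (n := m) i)
  simpa only [map_mul, E, R] using h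

lemma rel_Rri : R t4 m * Ri t4 m = 1 := by
  have h := RingQuot.mkAlgHom_rel ℂ (TLrel.rri (t4 := t4) (n := m))
  simpa only [map_mul, map_one, R, Ri] using h

lemma rel_Rir : Ri t4 m * R t4 m = 1 := by
  have h := RingQuot.mkAlgHom_rel ℂ (TLrel.rir (t4 := t4) (n := m))
  simpa only [map_mul, map_one, R, Ri] using h

lemma rel_comm (h : 3 ≤ m) (i j : ZMod m) (h1 : i - j ≠ 1) (h2 : i - j ≠ -1) :
    E t4 m i * E t4 m j = E t4 m j * E t4 m i := by
  have h := RingQuot.mkAlgHom_rel ℂ (TLrel.comm (t4 := t4) h i j h1 h2)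
  simpa only [map_mul, E] using h

lemma rel_eplus (h : 3 ≤ m) (i : ZMod m) :
    E t4 m i * E t4 m (i + 1) * E t4 m i = E t4 m i := by
  have h := RingQuot.mkAlgHom_rel ℂ (TLrel.eplus (t4 := t4) h i)
  simpa only [map_mul, E] using h

lemma rel_eminus (h : 3 ≤ m) (i : ZMod m) :
    E t4 m i * E t4 m (i - 1) * E t4 m i = E t4 m i := by
  have h := RingQuot.mkAlgHom_rel ℂ (TLrel.eminus (t4 := t4) h i)
  simpa only [map_mul, E] using h

lemma rel_cyc (h : 3 ≤ m) :
    (R t4 m * E t4 m 1) ^ (m - 1) = R t4 m ^ m * (R t4 m * E t4 m 1) := by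
  have h := RingQuot.mkAlgHom_rel ℂ (TLrel.cyc (t4 := t4) (n := m) h)
  simpa only [map_mul, map_pow, E, R] using h

end Rels

/-! ### Abstract Temperley–Lieb systems -/

structure TLsys (A : Type) [Ring A] [Algebra ℂ A] (t4 : ℂ) (m : ℕ) where
  e : ZMod m → A
  r : A
  ri : A
  esq : ∀ i, e i * e i = (-(t4 ^ 2 + t4⁻¹ ^ 2)) • e i
  rer : ∀ i, r * e i = e (i + 1) * r
  rri : r * ri = 1
  rir : ri * r = 1
  comm : ∀ i j, i - j ≠ 1 → i - j ≠ -1 → e i * e j = e j * e i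
  eplus : ∀ i, e i * e (i + 1) * e i = e i
  eminus : ∀ i, e i * e (i - 1) * e i = e i
  cyc : (r * e 1) ^ (m - 1) = r ^ m * (r * e 1)

def tlsys (t4 : ℂ) (m : ℕ) (hm : 3 ≤ m) : TLsys (TL t4 m) t4 m where
  e := E t4 m
  r := R t4 m
  ri := Ri t4 m
  esq := rel_Esq t4 m
  rer := rel_Rer t4 m
  rri := rel_Rri t4 m
  rir := rel_Rir t4 m
  comm := rel_comm t4 m hm
  eplus := rel_eplus t4 m hm
  eminus := rel_eminus t4 m hm
  cyc := rel_cyc t4 m hm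

namespace TLsys

variable {A : Type} [Ring A] [Algebra ℂ A] {t4 : ℂ} {m : ℕ}

def q (S : TLsys A t4 m) : A := S.e (-1)
def z (S : TLsys A t4 m) : A := S.e 0
def p (S : TLsys A t4 m) : A := S.e (-2)
def U (S : TLsys A t4 m) : A := t4 • S.q + algebraMap ℂ A t4⁻¹
def V (S : TLsys A t4 m) : A := t4⁻¹ • S.q + algebraMap ℂ A t4
def W (S : TLsys A t4 m) : A := S.U * S.z * S.V

end TLsys



lemma assoc3 {A : Type} [Ring A] {a b c d : A} (h : a*b*c = d) (x : A) :
    a*(b*(c*x)) = d*x := by rw [← mul_assoc, ← mul_assoc, h]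

lemma assoc3' {A : Type} [Ring A] {a b c d : A} (h : a*b*c = d) : a*(b*c) = d := by
  rw [← mul_assoc, h]

namespace TLsys
variable {A : Type} [Ring A] [Algebra ℂ A] {t4 : ℂ} {m : ℕ}

lemma natCast_ne {x y : ℕ} (h : x % m ≠ y % m) : (x : ZMod m) ≠ (y : ZMod m) := by
  rw [Ne, ZMod.natCast_eq_natCast_iff']; exact h

lemma neg_one_cast (hm : 1 ≤ m) : (-1 : ZMod m) = ((m-1 : ℕ) : ZMod m) := by
  have : ((m : ℕ) : ZMod m) = 0 := ZMod.natCast_self m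
  push_cast [Nat.cast_sub hm]
  rw [this]; ring

lemma neg_two_cast (hm : 2 ≤ m) : (-2 : ZMod m) = ((m-2 : ℕ) : ZMod m) := by
  have : ((m : ℕ) : ZMod m) = 0 := ZMod.natCast_self m
  push_cast [Nat.cast_sub hm]
  rw [this]; ring

variable (S : TLsys A t4 m)

lemma U_mul_V (ht4 : t4 ≠ 0) : S.U * S.V = 1 := by
  have hq := S.esq (-1)
  show (t4 • S.e (-1) + algebraMap ℂ A t4⁻¹) * (t4⁻¹ • S.e (-1) + algebraMap ℂ A t4) = 1
  simp only [Algebra.algebraMap_eq_smul_one, mul_add, add_mul, smul_mul_assoc,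
    mul_smul_comm, smul_smul, mul_one, one_mul]
  rw [hq]
  match_scalars <;> (field_simp; try ring)

lemma V_mul_U (ht4 : t4 ≠ 0) : S.V * S.U = 1 := by
  have hq := S.esq (-1)
  show (t4⁻¹ • S.e (-1) + algebraMap ℂ A t4) * (t4 • S.e (-1) + algebraMap ℂ A t4⁻¹) = 1
  simp only [Algebra.algebraMap_eq_smul_one, mul_add, add_mul, smul_mul_assoc,
    mul_smul_comm, smul_smul, mul_one, one_mul]
  rw [hq]
  match_scalars <;> (field_simp; try ring)

/-- commutation with `U` -/
lemma comm_U {x : A} (hq : x * S.q = S.q * x) : x * S.U = S.U * x := by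
  simp only [U, Algebra.algebraMap_eq_smul_one, mul_add, add_mul, mul_smul_comm,
    smul_mul_assoc, mul_one, one_mul, hq]

lemma comm_V {x : A} (hq : x * S.q = S.q * x) : x * S.V = S.V * x := by
  simp only [V, Algebra.algebraMap_eq_smul_one, mul_add, add_mul, mul_smul_comm,
    smul_mul_assoc, mul_one, one_mul, hq]

lemma comm_W {x : A} (hq : x * S.q = S.q * x) (hz : x * S.z = S.z * x) :
    x * S.W = S.W * x := by
  rw [W, mul_assoc, mul_assoc, ← mul_assoc x, comm_U S hq, mul_assoc, ← mul_assoc x,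
    hz, mul_assoc, comm_V S hq, ← mul_assoc, ← mul_assoc]
  simp only [mul_assoc]

lemma W_sq (ht4 : t4 ≠ 0) : S.W * S.W = (-(t4 ^ 2 + t4⁻¹ ^ 2)) • S.W := by
  have hz : S.z * S.z = (-(t4 ^ 2 + t4⁻¹ ^ 2)) • S.z := S.esq 0
  simp only [W, mul_assoc]
  rw [← mul_assoc S.V S.U, V_mul_U S ht4, one_mul, ← mul_assoc S.z S.z, hz,
    smul_mul_assoc, mul_smul_comm]

end TLsys


lemma assoc2 {A : Type} [Ring A] {a b : A} (h : a*b = b*a) (x : A) :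
    a*(b*x) = b*(a*x) := by rw [← mul_assoc, h, mul_assoc]

lemma sq_move {A : Type} [Ring A] {a : A} {c : ℂ} [Algebra ℂ A] (h : a*a = c • a) (x : A) :
    a*(a*x) = c • (a*x) := by rw [← mul_assoc, h, smul_mul_assoc]

namespace TLsys
variable {A : Type} [Ring A] [Algebra ℂ A] {t4 : ℂ} {m : ℕ} (S : TLsys A t4 m)

lemma natCast_ne_natCast {x y : ℕ} (hx : x < m) (hy : y < m) (h : x ≠ y) :
    (x : ZMod m) ≠ (y : ZMod m) := by
  rw [Ne, ZMod.natCast_eq_natCast_iff', Nat.mod_eq_of_lt hx, Nat.mod_eq_of_lt hy]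
  exact h

lemma cast_sub_ne_one {x y : ℕ} (hx : x < m) (hy : 1 + y < m) (h : x ≠ 1 + y) :
    (x : ZMod m) - (y : ZMod m) ≠ 1 := by
  intro hc
  have h2 : ((x : ℕ) : ZMod m) = ((1 + y : ℕ) : ZMod m) := by push_cast; linear_combination hc
  exact natCast_ne_natCast hx hy h h2

lemma cast_sub_ne_neg_one {x y : ℕ} (hx : x + 1 < m) (hy : y < m) (h : x + 1 ≠ y) :
    (x : ZMod m) - (y : ZMod m) ≠ -1 := by
  intro hc
  have h2 : ((x + 1 : ℕ) : ZMod m) = ((y : ℕ) : ZMod m) := by push_cast; linear_combination hc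
  exact natCast_ne_natCast hx hy h h2

lemma two_ne_one (hm : 3 ≤ m) : (2 : ZMod m) ≠ 1 := by
  rw [show (2 : ZMod m) = ((2 : ℕ) : ZMod m) by push_cast; ring,
     show (1 : ZMod m) = ((1 : ℕ) : ZMod m) by push_cast; ring]
  exact natCast_ne_natCast (by omega) (by omega) (by omega)

lemma two_ne_neg_one (hm : 4 ≤ m) : (2 : ZMod m) ≠ -1 := by
  rw [show (2 : ZMod m) = ((2 : ℕ) : ZMod m) by push_cast; ring, neg_one_cast (m := m) (by omega)]
  exact natCast_ne_natCast (by omega) (by omega) (by omega)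

/- index-instance relations -/
lemma qq : S.q * S.q = (-(t4 ^ 2 + t4⁻¹ ^ 2)) • S.q := S.esq (-1)
lemma zz : S.z * S.z = (-(t4 ^ 2 + t4⁻¹ ^ 2)) • S.z := S.esq 0
lemma pp : S.p * S.p = (-(t4 ^ 2 + t4⁻¹ ^ 2)) • S.p := S.esq (-2)

lemma qzq : S.q * S.z * S.q = S.q := by
  have h := S.eplus (-1); rwa [neg_add_cancel] at h

lemma zqz : S.z * S.q * S.z = S.z := by
  have h := S.eminus 0; rwa [zero_sub] at h

lemma pqp : S.p * S.q * S.p = S.p := by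
  have h := S.eplus (-2)
  rwa [show (-2 : ZMod m) + 1 = -1 by ring] at h

lemma qpq : S.q * S.p * S.q = S.q := by
  have h := S.eminus (-1)
  rwa [show (-1 : ZMod m) - 1 = -2 by ring] at h

lemma z1z : S.z * S.e 1 * S.z = S.z := by
  have h := S.eplus 0; rwa [zero_add] at h


lemma e1ze1 : S.e 1 * S.z * S.e 1 = S.e 1 := by
  have h := S.eminus 1; rwa [sub_self] at h

lemma c1q (hm : 4 ≤ m) : S.e 1 * S.q = S.q * S.e 1 := by
  refine S.comm 1 (-1) ?_ ?_ <;> rw [show (1 : ZMod m) - (-1) = 2 by ring]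
  · exact two_ne_one (by omega)
  · exact two_ne_neg_one hm

lemma czp (hm : 4 ≤ m) : S.z * S.p = S.p * S.z := by
  refine S.comm 0 (-2) ?_ ?_ <;> rw [show (0 : ZMod m) - (-2) = 2 by ring]
  · exact two_ne_one (by omega)
  · exact two_ne_neg_one hm

/- pushing r through the generators -/
lemma hqr : S.q * S.r = S.r * S.p := by
  have h := S.rer (-2)
  rw [show (-2 : ZMod m) + 1 = -1 by ring] at h
  exact h.symm

lemma hzr : S.z * S.r = S.r * S.q := by
  have h := S.rer (-1)
  rw [neg_add_cancel] at h
  exact h.symm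

lemma h1r : S.e 1 * S.r = S.r * S.z := by
  have h := S.rer 0
  rw [zero_add] at h
  exact h.symm

lemma hVr : S.V * S.r = S.r * (t4⁻¹ • S.p + algebraMap ℂ A t4) := by
  simp only [V, add_mul, mul_add, smul_mul_assoc, mul_smul_comm, hqr,
    Algebra.algebraMap_eq_smul_one, one_mul, mul_one]

lemma hUr : S.U * S.r = S.r * (t4 • S.p + algebraMap ℂ A t4⁻¹) := by
  simp only [U, add_mul, mul_add, smul_mul_assoc, mul_smul_comm, hqr,
    Algebra.algebraMap_eq_smul_one, one_mul, mul_one]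

end TLsys

namespace TLsys
variable {A : Type} [Ring A] [Algebra ℂ A] {t4 : ℂ} {m : ℕ} (S : TLsys A t4 m)

/-- the key computation for `rer` at `i = n-1`. -/
lemma rer_key (ht4 : t4 ≠ 0) :
    (t4 • S.p + algebraMap ℂ A t4⁻¹) * (S.q * ((t4⁻¹ • S.p + algebraMap ℂ A t4) * S.V)) =
      S.V * S.p := by
  simp only [V, Algebra.algebraMap_eq_smul_one, mul_add, add_mul, smul_mul_assoc,
    mul_smul_comm, smul_smul, smul_add, mul_one, one_mul, mul_assoc]
  simp only [assoc3' S.qpq, assoc3 S.qpq, assoc3' S.pqp, assoc3 S.pqp, sq_move S.qq, S.qq]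
  simp only [mul_smul_comm, smul_smul]
  match_scalars <;> (field_simp; try ring)

lemma rer_m1 (ht4 : t4 ≠ 0) : (S.r * S.V) * S.p = S.W * (S.r * S.V) := by
  symm
  calc S.W * (S.r * S.V) = S.U * (S.z * (S.V * (S.r * S.V))) := by
        simp only [W, mul_assoc]
    _ = S.U * (S.z * (S.r * ((t4⁻¹ • S.p + algebraMap ℂ A t4) * S.V))) := by
        rw [← mul_assoc S.V S.r, hVr, mul_assoc]
    _ = S.U * (S.r * (S.q * ((t4⁻¹ • S.p + algebraMap ℂ A t4) * S.V))) := by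
        rw [← mul_assoc S.z S.r, hzr, mul_assoc]
    _ = S.r * ((t4 • S.p + algebraMap ℂ A t4⁻¹) *
          (S.q * ((t4⁻¹ • S.p + algebraMap ℂ A t4) * S.V))) := by
        rw [← mul_assoc S.U S.r, hUr, mul_assoc]
    _ = S.r * (S.V * S.p) := by rw [rer_key S ht4]
    _ = S.r * S.V * S.p := by rw [mul_assoc]

lemma rz : S.r * S.z = S.e 1 * S.r := by
  have h := S.rer 0; rwa [zero_add] at h

lemma rer_0 (ht4 : t4 ≠ 0) : (S.r * S.V) * S.W = S.e 1 * (S.r * S.V) := by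
  calc S.r * S.V * S.W = S.r * ((S.V * S.U) * (S.z * S.V)) := by simp only [W, mul_assoc]
    _ = S.r * (S.z * S.V) := by rw [V_mul_U S ht4, one_mul]
    _ = (S.r * S.z) * S.V := by rw [mul_assoc]
    _ = S.e 1 * (S.r * S.V) := by rw [rz, mul_assoc]

lemma rer_gen (J : ZMod m) (hJq : S.e J * S.q = S.q * S.e J) :
    (S.r * S.V) * S.e J = S.e (J + 1) * (S.r * S.V) := by
  calc S.r * S.V * S.e J = S.r * (S.V * S.e J) := by rw [mul_assoc]
    _ = S.r * (S.e J * S.V) := by rw [← comm_V S hJq]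
    _ = (S.r * S.e J) * S.V := by rw [mul_assoc]
    _ = S.e (J + 1) * (S.r * S.V) := by rw [S.rer J, mul_assoc]

lemma rri' (ht4 : t4 ≠ 0) : (S.r * S.V) * (S.U * S.ri) = 1 := by
  rw [mul_assoc, ← mul_assoc S.V, V_mul_U S ht4, one_mul, S.rri]

lemma rir' (ht4 : t4 ≠ 0) : (S.U * S.ri) * (S.r * S.V) = 1 := by
  rw [mul_assoc, ← mul_assoc S.ri, S.rir, one_mul, U_mul_V S ht4]

lemma eplus_m1 (hm : 4 ≤ m) (ht4 : t4 ≠ 0) : S.p * S.W * S.p = S.p := by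
  simp only [W, U, V, Algebra.algebraMap_eq_smul_one, mul_add, add_mul, smul_mul_assoc,
    mul_smul_comm, smul_smul, smul_add, mul_one, one_mul, mul_assoc]
  simp only [assoc3 S.qzq, assoc3' S.qzq, assoc3 S.pqp, assoc3' S.pqp, czp S hm,
    sq_move S.pp, S.pp]
  simp only [assoc2 (czp S hm).symm, assoc3 S.pqp, assoc3' S.pqp, czp S hm, sq_move S.pp, S.pp]
  simp only [mul_smul_comm, smul_smul]
  match_scalars <;> (field_simp; try ring)

lemma eplus_0 (hm : 4 ≤ m) (ht4 : t4 ≠ 0) : S.W * S.e 1 * S.W = S.W := by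
  calc S.W * S.e 1 * S.W
      = S.U * (S.z * (S.V * (S.e 1 * (S.U * (S.z * S.V))))) := by simp only [W, mul_assoc]
    _ = S.U * (S.z * (S.e 1 * (S.V * (S.U * (S.z * S.V))))) := by
        rw [assoc2 (comm_V S (c1q S hm)).symm]
    _ = S.U * (S.z * (S.e 1 * ((S.V * S.U) * (S.z * S.V)))) := by rw [← mul_assoc S.V S.U]
    _ = S.U * (S.z * (S.e 1 * (S.z * S.V))) := by rw [V_mul_U S ht4, one_mul]
    _ = S.U * (S.z * S.V) := by rw [assoc3 S.z1z]
    _ = S.W := by simp only [W, mul_assoc]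

lemma eminus_1 (hm : 4 ≤ m) (ht4 : t4 ≠ 0) : S.e 1 * S.W * S.e 1 = S.e 1 := by
  calc S.e 1 * S.W * S.e 1
      = S.e 1 * (S.U * (S.z * (S.V * S.e 1))) := by simp only [W, mul_assoc]
    _ = S.U * (S.e 1 * (S.z * (S.V * S.e 1))) := by rw [assoc2 (comm_U S (c1q S hm))]
    _ = S.U * (S.e 1 * (S.z * (S.e 1 * S.V))) := by rw [← comm_V S (c1q S hm)]
    _ = S.U * (S.e 1 * S.V) := by rw [assoc3 S.e1ze1]
    _ = S.U * (S.V * S.e 1) := by rw [comm_V S (c1q S hm)]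
    _ = (S.U * S.V) * S.e 1 := by rw [mul_assoc]
    _ = S.e 1 := by rw [U_mul_V S ht4, one_mul]

end TLsys

namespace TLsys
variable {A : Type} [Ring A] [Algebra ℂ A] {t4 : ℂ} {m : ℕ} (S : TLsys A t4 m)

lemma mid (ht4 : t4 ≠ 0) : S.V * (S.p * S.U) =
    S.q + S.p + (t4⁻¹*t4⁻¹) • (S.q * S.p) + (t4*t4) • (S.p * S.q) := by
  simp only [V, U, Algebra.algebraMap_eq_smul_one, mul_add, add_mul, smul_mul_assoc,
    mul_smul_comm, smul_smul, smul_add, mul_one, one_mul, mul_assoc]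
  simp only [assoc3' S.qpq]
  match_scalars <;> (field_simp; try ring)

lemma eminus_0 (hm : 4 ≤ m) (ht4 : t4 ≠ 0) : S.W * S.p * S.W = S.W := by
  have h1 : S.z * (S.q * (S.z * S.V)) = S.z * S.V := assoc3 S.zqz _
  have h2 : S.z * (S.p * (S.z * S.V)) = (-(t4^2+t4⁻¹^2)) • (S.p * (S.z * S.V)) := by
    rw [assoc2 (czp S hm), sq_move S.zz, mul_smul_comm]
  have h3 : S.z * ((S.q * S.p) * (S.z * S.V)) = S.p * (S.z * S.V) := by
    rw [mul_assoc S.q S.p (S.z * S.V), assoc2 (czp S hm).symm S.V,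
      assoc3 S.zqz (S.p * S.V), assoc2 (czp S hm) S.V]
  have h4 : S.z * ((S.p * S.q) * (S.z * S.V)) = S.p * (S.z * S.V) := by
    rw [mul_assoc S.p S.q (S.z * S.V), assoc2 (czp S hm) (S.q * (S.z * S.V)),
      assoc3 S.zqz S.V]
  calc S.W * S.p * S.W
      = S.U * (S.z * ((S.V * (S.p * S.U)) * (S.z * S.V))) := by simp only [W, mul_assoc]
    _ = S.U * (S.z * ((S.q + S.p + (t4⁻¹*t4⁻¹) • (S.q * S.p) + (t4*t4) • (S.p * S.q))
          * (S.z * S.V))) := by rw [mid S ht4]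
    _ = S.U * (S.z * S.V) := by
        congr 1
        simp only [add_mul, mul_add, smul_mul_assoc, mul_smul_comm]
        rw [h1, h2, h3, h4]
        match_scalars <;> (field_simp; try ring)
    _ = S.W := by simp only [W, mul_assoc]

lemma cancel_r {x y : A} (h : S.r * x = S.r * y) : x = y := by
  have h2 := congrArg (S.ri * ·) h
  simpa only [← mul_assoc, S.rir, one_mul] using h2

end TLsys

/-- the n = 2 special relation check (in an abstract system with m = 3). -/
lemma TLsys.two_key {A : Type} [Ring A] [Algebra ℂ A] {t4 : ℂ}
    (S : TLsys A t4 3) (ht4 : t4 ≠ 0) :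
    (S.r * S.V) * (S.r * S.V) * S.e 1 = S.e 1 := by
  have hp1 : S.p = S.e 1 := congrArg S.e (by decide)
  have hr2 : S.r * S.e 2 = S.e 0 * S.r := by
    have h := S.rer 2; rwa [show (2 + 1 : ZMod 3) = 0 by decide] at h
  have rz0 : S.r * S.e 0 = S.e 1 * S.r := by
    have h := S.rer 0; rwa [zero_add] at h
  -- step 1: `z * e 1 = r * (r * e 1)` from the cyclic relation
  have hcyc : S.z * S.e 1 = S.r * (S.r * S.e 1) := by
    have h := S.cyc
    rw [show (3 - 1 : ℕ) = 2 from rfl, pow_two, pow_succ, pow_two] at h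
    have hL : (S.r * S.e 1) * (S.r * S.e 1) = S.r * (S.r * (S.z * S.e 1)) := by
      rw [mul_assoc, ← mul_assoc (S.e 1) S.r (S.e 1), S.h1r]
      simp only [mul_assoc]
    rw [hL] at h
    simp only [mul_assoc] at h
    exact S.cancel_r (S.cancel_r h)
  -- step 2: the inner product expansion
  have sub1 : (t4⁻¹ • S.p + algebraMap ℂ A t4) * (S.V * S.e 1) = S.e 2 * S.e 1 := by
    have he121 : S.e 1 * S.e 2 * S.e 1 = S.e 1 := by
      have h := S.eplus 1; rwa [show (1 + 1 : ZMod 3) = 2 by decide] at h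
    have he11 : S.e 1 * S.e 1 = (-(t4^2+t4⁻¹^2)) • S.e 1 := S.esq 1
    rw [hp1]
    simp only [V, q, show (-1 : ZMod 3) = 2 by decide, Algebra.algebraMap_eq_smul_one,
      mul_add, add_mul, smul_mul_assoc, mul_smul_comm, smul_smul, smul_add, mul_one,
      one_mul, mul_assoc]
    simp only [assoc3' he121, assoc3 he121, he11]
    simp only [mul_smul_comm, smul_smul]
    match_scalars <;> (field_simp; try ring)
  have he101 : S.e 1 * S.e 0 * S.e 1 = S.e 1 := by
    have h := S.eminus 1; rwa [sub_self] at h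
  -- assemble
  calc (S.r * S.V) * (S.r * S.V) * S.e 1
      = S.r * (S.V * (S.r * (S.V * S.e 1))) := by simp only [mul_assoc]
    _ = S.r * (S.r * ((t4⁻¹ • S.p + algebraMap ℂ A t4) * (S.V * S.e 1))) := by
        rw [← mul_assoc S.V S.r, S.hVr, mul_assoc]
    _ = S.r * (S.r * (S.e 2 * S.e 1)) := by rw [sub1]
    _ = S.r * ((S.r * S.e 2) * S.e 1) := by simp only [mul_assoc]
    _ = S.r * ((S.e 0 * S.r) * S.e 1) := by rw [hr2]
    _ = (S.r * S.e 0) * (S.r * S.e 1) := by simp only [mul_assoc]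
    _ = (S.e 1 * S.r) * (S.r * S.e 1) := by rw [rz0]
    _ = S.e 1 * (S.r * (S.r * S.e 1)) := by simp only [mul_assoc]
    _ = S.e 1 * (S.z * S.e 1) := by rw [← hcyc]
    _ = S.e 1 := by rw [show S.z = S.e 0 from rfl, ← mul_assoc, he101]



section DDgen
variable {A : Type} [Ring A] {μ : ℕ}

/-- the descending product `e (2-k) ⋯ e 0 * e 1` -/
def DD (e : ZMod μ → A) : ℕ → A
  | 0 => 1
  | (j+1) => e (1 - (j : ZMod μ)) * DD e j

lemma er_pow (e : ZMod μ → A) (r : A) (hre : ∀ i, r * e i = e (i+1) * r) (j : ZMod μ) :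
    ∀ k : ℕ, e j * r ^ k = r ^ k * e (j - (k : ZMod μ))
  | 0 => by simp
  | (k+1) => by
    have step : e (j - (k : ZMod μ)) * r = r * e (j - ((k+1 : ℕ) : ZMod μ)) := by
      have h := hre (j - ((k+1 : ℕ) : ZMod μ))
      rw [show j - ((k+1 : ℕ) : ZMod μ) + 1 = j - (k : ZMod μ) by push_cast; ring] at h
      exact h.symm
    rw [pow_succ, ← mul_assoc, er_pow e r hre j k, mul_assoc, step, ← mul_assoc,
      ← pow_succ, pow_succ, mul_assoc]

lemma re_pow (e : ZMod μ → A) (r : A) (hre : ∀ i, r * e i = e (i+1) * r) :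
    ∀ k : ℕ, (r * e 1) ^ k = r ^ k * DD e k
  | 0 => by simp [DD]
  | (k+1) => by
    rw [pow_succ', re_pow e r hre k, ← mul_assoc, mul_assoc _ (e 1) _, er_pow e r hre 1 k,
      ← mul_assoc, mul_assoc (r * r ^ k), ← pow_succ']
    rfl

end DDgen

namespace TLsys
variable {A : Type} [Ring A] [Algebra ℂ A] {t4 : ℂ} {m : ℕ}

lemma neg_natCast {x : ℕ} (hx : x ≤ m) : -((x:ℕ) : ZMod m) = ((m - x : ℕ) : ZMod m) := by
  have h0 : ((m : ℕ) : ZMod m) = 0 := ZMod.natCast_self m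
  push_cast [Nat.cast_sub hx]
  rw [h0]; ring

variable (S : TLsys A t4 m)

/-- the product `e (-2) * e (-3) * ⋯ * e (-(j+1))`, reversed -/
def VV : ℕ → A
  | 0 => 1
  | (j+1) => S.e (-((j : ZMod m) + 2)) * VV j

lemma DD_VV : ∀ j : ℕ, DD S.e (j+3) = S.VV j * DD S.e 3
  | 0 => by rw [VV, one_mul]
  | (j+1) => by
    have h1 : DD S.e (j+4) = S.e (1 - ((j+3 : ℕ) : ZMod m)) * DD S.e (j+3) := rfl
    rw [h1, DD_VV j, show (1 : ZMod m) - ((j+3 : ℕ) : ZMod m) = -((j : ZMod m) + 2) by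
      push_cast; ring, ← mul_assoc]
    conv_rhs => rw [VV]

lemma cancel_r_pow : ∀ (k : ℕ) {x y : A}, S.r ^ k * x = S.r ^ k * y → x = y
  | 0, x, y, h => by simpa using h
  | (k+1), x, y, h => by
    rw [pow_succ', mul_assoc, mul_assoc] at h
    exact cancel_r_pow k (S.cancel_r h)

lemma key_target (hm : 3 ≤ m) : DD S.e (m-1) = S.r * (S.r * S.e 1) := by
  have h := S.cyc
  rw [re_pow S.e S.r S.rer (m-1)] at h
  obtain ⟨k, rfl⟩ : ∃ k, m = k + 1 := ⟨m - 1, by omega⟩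
  rw [Nat.add_sub_cancel] at h ⊢
  rw [pow_succ] at h
  simp only [mul_assoc] at h
  exact S.cancel_r_pow k h

lemma DD3 : DD S.e 3 = S.q * (S.z * (S.e 1 * 1)) := by
  show S.e (1 - ((2:ℕ) : ZMod m)) * (S.e (1 - ((1:ℕ) : ZMod m)) * (S.e (1 - ((0:ℕ) : ZMod m)) * 1)) = _
  rw [show (1 : ZMod m) - ((2:ℕ) : ZMod m) = -1 by push_cast; ring,
      show (1 : ZMod m) - ((1:ℕ) : ZMod m) = 0 by push_cast; ring,
      show (1 : ZMod m) - ((0:ℕ) : ZMod m) = 1 by push_cast; ring]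
  rfl

lemma VV_comm0 : ∀ j : ℕ, j + 4 ≤ m → S.z * S.VV j = S.VV j * S.z
  | 0, _ => by rw [VV, one_mul, mul_one]
  | (j+1), h => by
    have hcomm : S.z * S.e (-((j : ZMod m) + 2)) = S.e (-((j : ZMod m) + 2)) * S.z := by
      show S.e 0 * S.e (-((j : ZMod m) + 2)) = S.e (-((j : ZMod m) + 2)) * S.e 0
      refine (S.comm _ 0 ?_ ?_).symm <;>
        rw [show -((j : ZMod m) + 2) - 0 = -((j+2 : ℕ) : ZMod m) by push_cast; ring,
          neg_natCast (m := m) (by omega)]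
      · rw [show (1:ZMod m) = ((1:ℕ) : ZMod m) by push_cast; ring]
        exact natCast_ne_natCast (by omega) (by omega) (by omega)
      · rw [neg_one_cast (m := m) (by omega)]
        exact natCast_ne_natCast (by omega) (by omega) (by omega)
    rw [VV, ← mul_assoc, hcomm, mul_assoc, VV_comm0 j (by omega), ← mul_assoc]

lemma VV_comm1 : ∀ j : ℕ, j + 4 ≤ m → S.e 1 * S.VV j = S.VV j * S.e 1
  | 0, _ => by rw [VV, one_mul, mul_one]
  | (j+1), h => by
    have hcomm : S.e 1 * S.e (-((j : ZMod m) + 2)) = S.e (-((j : ZMod m) + 2)) * S.e 1 := by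
      refine (S.comm _ 1 ?_ ?_).symm <;>
        rw [show -((j : ZMod m) + 2) - 1 = -((j+3 : ℕ) : ZMod m) by push_cast; ring,
          neg_natCast (m := m) (by omega)]
      · rw [show (1:ZMod m) = ((1:ℕ) : ZMod m) by push_cast; ring]
        exact natCast_ne_natCast (by omega) (by omega) (by omega)
      · rw [neg_one_cast (m := m) (by omega)]
        exact natCast_ne_natCast (by omega) (by omega) (by omega)
    rw [VV, ← mul_assoc, hcomm, mul_assoc, VV_comm1 j (by omega), ← mul_assoc]

end TLsys

namespace TLsys
variable {A : Type} [Ring A] [Algebra ℂ A] {t4 : ℂ} {m : ℕ} (S : TLsys A t4 m)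

lemma rpush_p (x : A) : S.r * (S.p * x) = S.q * (S.r * x) := by
  rw [← mul_assoc, ← S.hqr, mul_assoc]

lemma rpush_q (x : A) : S.r * (S.q * x) = S.z * (S.r * x) := by
  rw [← mul_assoc, ← S.hzr, mul_assoc]

lemma rpush_z (x : A) : S.r * (S.z * x) = S.e 1 * (S.r * x) := by
  rw [← mul_assoc, ← S.h1r, mul_assoc]

lemma sub1 (ht4 : t4 ≠ 0) : (t4⁻¹ • S.p + algebraMap ℂ A t4) * (S.V * S.e 1) =
    (t4⁻¹*t4⁻¹) • (S.p * (S.q * S.e 1)) + S.p * S.e 1 + S.q * S.e 1 + (t4*t4) • S.e 1 := by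
  simp only [V, Algebra.algebraMap_eq_smul_one, mul_add, add_mul, smul_mul_assoc,
    mul_smul_comm, smul_smul, smul_add, mul_one, one_mul, mul_assoc]
  match_scalars <;> (field_simp; try ring)

lemma bracket (hm : 4 ≤ m) (ht4 : t4 ≠ 0) : S.W * S.e 1 =
    (t4⁻¹*t4⁻¹) • (S.z * (S.e 1 * (S.q * (S.z * S.e 1)))) + S.z * (S.q * (S.z * S.e 1))
      + S.e 1 * (S.q * (S.z * S.e 1)) + (t4*t4) • (S.q * (S.z * S.e 1)) := by
  simp only [W, U, V, Algebra.algebraMap_eq_smul_one, mul_add, add_mul, smul_mul_assoc,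
    mul_smul_comm, smul_smul, smul_add, mul_one, one_mul, mul_assoc]
  simp only [assoc2 (c1q S hm), assoc3' S.e1ze1, assoc3 S.e1ze1, assoc3 S.zqz,
    assoc3' S.zqz, assoc3 S.qzq, assoc3' S.qzq]
  try simp only [mul_smul_comm, smul_smul]
  match_scalars <;> (field_simp; try ring)

lemma key_final (hm : 4 ≤ m) (ht4 : t4 ≠ 0) (K : A)
    (hK0 : S.z * K = K * S.z) (hK1 : S.e 1 * K = K * S.e 1)
    (hKey : K * (S.q * (S.z * S.e 1)) = S.r * (S.r * S.e 1)) :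
    K * (S.W * S.e 1) = (S.r * S.V) * ((S.r * S.V) * S.e 1) := by
  have hRHS : (S.r * S.V) * ((S.r * S.V) * S.e 1) =
      S.r * (S.r * ((t4⁻¹ • S.p + algebraMap ℂ A t4) * (S.V * S.e 1))) := by
    simp only [mul_assoc]
    rw [← mul_assoc S.V S.r, S.hVr]
    simp only [mul_assoc]
  rw [hRHS, sub1 S ht4]
  simp only [mul_add, mul_smul_comm]
  simp only [rpush_p S, rpush_q S, rpush_z S]
  rw [← hKey]
  simp only [assoc2 hK1, assoc2 hK0]
  rw [bracket S hm ht4]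
  simp only [mul_add, mul_smul_comm]

end TLsys

namespace TLsys
variable {A : Type} [Ring A] [Algebra ℂ A] {t4 : ℂ} {n : ℕ} (S : TLsys A t4 (n+1))

/-- the image of the generator `e i` of `TL n` -/
noncomputable def eP (i : ZMod n) : A := if i = 0 then S.W else S.e ((i.val : ℕ) : ZMod (n+1))

/-- the image of `ρ` -/
noncomputable def rP : A := S.r * S.V

/-- the image of `ρ⁻¹` -/
noncomputable def riP : A := S.U * S.ri

lemma eP_zero : S.eP 0 = S.W := if_pos rfl

lemma eP_cast (hn : 2 ≤ n) {k : ℕ} (h1 : 1 ≤ k) (h2 : k ≤ n - 1) :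
    S.eP (k : ZMod n) = S.e ((k : ℕ) : ZMod (n+1)) := by
  rw [eP, if_neg, ZMod.val_cast_of_lt (by omega)]
  rw [show (0 : ZMod n) = ((0 : ℕ) : ZMod n) by push_cast; ring]
  exact natCast_ne_natCast (by omega) (by omega) (by omega)

lemma eP_one (hn : 2 ≤ n) : S.eP 1 = S.e 1 := by
  have h := S.eP_cast hn (k := 1) le_rfl (by omega)
  simpa using h

lemma castn1 : ((n : ℕ) : ZMod (n+1)) = -1 := by
  have h := ZMod.natCast_self (n+1)
  push_cast at h
  linear_combination h

lemma eP_neg_one (hn : 2 ≤ n) : S.eP (-1) = S.p := by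
  rw [neg_one_cast (m := n) (by omega), S.eP_cast hn (by omega) (by omega), p]
  congr 1
  rw [neg_two_cast (m := n+1) (by omega), show n+1-2 = n-1 by omega]

lemma exists_nat (hn : 0 < n) (i : ZMod n) : ∃ k : ℕ, k < n ∧ (k : ZMod n) = i := by
  haveI : NeZero n := ⟨by omega⟩
  exact ⟨i.val, ZMod.val_lt i, ZMod.natCast_rightInverse i⟩

/-- commutation of a middle generator with `q` -/
lemma comm_q_of (hn : 2 ≤ n) {k : ℕ} (h1 : 1 ≤ k) (h2 : k + 1 ≤ n - 1) :
    S.e ((k : ℕ) : ZMod (n+1)) * S.q = S.q * S.e ((k : ℕ) : ZMod (n+1)) := by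
  refine S.comm _ (-1) ?_ ?_ <;>
    rw [show ((k:ℕ) : ZMod (n+1)) - (-1) = ((k+1 : ℕ) : ZMod (n+1)) by push_cast; ring]
  · rw [show (1 : ZMod (n+1)) = ((1:ℕ) : ZMod (n+1)) by push_cast; ring]
    exact natCast_ne_natCast (by omega) (by omega) (by omega)
  · rw [neg_one_cast (m := n+1) (by omega), show n+1-1 = n by omega]
    exact natCast_ne_natCast (by omega) (by omega) (by omega)

/-- commutation of a middle generator with `z` -/
lemma comm_z_of (hn : 2 ≤ n) {k : ℕ} (h1 : 2 ≤ k) (h2 : k ≤ n - 1) :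
    S.e ((k : ℕ) : ZMod (n+1)) * S.z = S.z * S.e ((k : ℕ) : ZMod (n+1)) := by
  refine S.comm _ 0 ?_ ?_ <;>
    rw [show ((k:ℕ) : ZMod (n+1)) - 0 = ((k : ℕ) : ZMod (n+1)) by push_cast; ring]
  · rw [show (1 : ZMod (n+1)) = ((1:ℕ) : ZMod (n+1)) by push_cast; ring]
    exact natCast_ne_natCast (by omega) (by omega) (by omega)
  · rw [neg_one_cast (m := n+1) (by omega), show n+1-1 = n by omega]
    exact natCast_ne_natCast (by omega) (by omega) (by omega)

lemma V_rer (hn : 2 ≤ n) (ht4 : t4 ≠ 0) (i : ZMod n) :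
    S.rP * S.eP i = S.eP (i+1) * S.rP := by
  obtain ⟨k, hk, rfl⟩ := exists_nat (by omega) i
  rcases Nat.eq_zero_or_pos k with h0 | h1
  · subst h0
    rw [show ((0:ℕ) : ZMod n) = 0 by push_cast; ring, eP_zero, zero_add, eP_one S hn]
    exact rer_0 S ht4
  rcases eq_or_lt_of_le (show k ≤ n-1 by omega) with h2 | h2
  · subst h2
    rw [show ((n-1:ℕ) : ZMod n) + 1 = 0 by
        push_cast [Nat.cast_sub (show 1 ≤ n by omega)]
        rw [ZMod.natCast_self]; ring,
      eP_zero, ← neg_one_cast (m := n) (by omega), eP_neg_one S hn]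
    exact rer_m1 S ht4
  · have hk2 : k ≤ n - 2 := by omega
    rw [eP_cast S hn h1 (by omega),
      show ((k:ℕ) : ZMod n) + 1 = ((k+1 : ℕ) : ZMod n) by push_cast; ring,
      eP_cast S hn (k := k+1) (by omega) (by omega),
      show ((k+1:ℕ) : ZMod (n+1)) = ((k:ℕ) : ZMod (n+1)) + 1 by push_cast; ring]
    exact rer_gen S _ (comm_q_of S hn h1 (by omega))

lemma V_esq (hn : 2 ≤ n) (ht4 : t4 ≠ 0) (i : ZMod n) :
    S.eP i * S.eP i = (-(t4 ^ 2 + t4⁻¹ ^ 2)) • S.eP i := by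
  obtain ⟨k, hk, rfl⟩ := exists_nat (by omega) i
  rcases Nat.eq_zero_or_pos k with h0 | h1
  · subst h0
    rw [show ((0:ℕ) : ZMod n) = 0 by push_cast; ring, eP_zero]
    exact W_sq S ht4
  · rw [eP_cast S hn h1 (by omega)]
    exact S.esq _

lemma V_rri (ht4 : t4 ≠ 0) : S.rP * S.riP = 1 := rri' S ht4
lemma V_rir (ht4 : t4 ≠ 0) : S.riP * S.rP = 1 := rir' S ht4

end TLsys

namespace TLsys
variable {A : Type} [Ring A] [Algebra ℂ A] {t4 : ℂ} {n : ℕ} (S : TLsys A t4 (n+1))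

lemma V_comm (hn : 3 ≤ n) (ht4 : t4 ≠ 0) (i j : ZMod n) (h1 : i - j ≠ 1) (h2 : i - j ≠ -1) :
    S.eP i * S.eP j = S.eP j * S.eP i := by
  obtain ⟨k, hk, rfl⟩ := exists_nat (by omega) i
  obtain ⟨l, hl, rfl⟩ := exists_nat (by omega) j
  rcases eq_or_ne k l with rfl | hkl
  · rfl
  rcases Nat.eq_zero_or_pos k with hk0 | hk1
  · -- k = 0 : W commutes with e l, 2 ≤ l ≤ n-2
    subst hk0
    have hl1 : l ≠ 1 := by
      rintro rfl
      exact h2 (by push_cast; ring)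
    have hln : l ≠ n - 1 := by
      rintro rfl
      refine h1 ?_
      rw [show ((0:ℕ) : ZMod n) - ((n-1 : ℕ) : ZMod n) = 1 by
        push_cast [Nat.cast_sub (show 1 ≤ n by omega)]
        rw [ZMod.natCast_self]; ring]
    rw [show ((0:ℕ) : ZMod n) = 0 by push_cast; ring, eP_zero,
      eP_cast S (by omega) (by omega) (by omega)]
    exact (comm_W S (comm_q_of S (by omega) (by omega) (by omega))
      (comm_z_of S (by omega) (by omega) (by omega))).symm
  rcases Nat.eq_zero_or_pos l with hl0 | hl1
  · -- l = 0
    subst hl0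
    have hk1' : k ≠ 1 := by
      rintro rfl
      exact h1 (by push_cast; ring)
    have hkn : k ≠ n - 1 := by
      rintro rfl
      refine h2 ?_
      rw [show ((n-1:ℕ) : ZMod n) - ((0 : ℕ) : ZMod n) = -1 by
        push_cast [Nat.cast_sub (show 1 ≤ n by omega)]
        rw [ZMod.natCast_self]; ring]
    rw [show ((0:ℕ) : ZMod n) = 0 by push_cast; ring, eP_zero,
      eP_cast S (by omega) (by omega) (by omega)]
    exact comm_W S (comm_q_of S (by omega) (by omega) (by omega))
      (comm_z_of S (by omega) (by omega) (by omega))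
  · -- both nonzero
    have hne1 : k ≠ 1 + l := by
      rintro rfl
      exact h1 (by push_cast; ring)
    have hne2 : l ≠ k + 1 := by
      rintro rfl
      exact h2 (by push_cast; ring)
    rw [eP_cast S (by omega) (by omega) (by omega),
        eP_cast S (by omega) (by omega) (by omega)]
    exact S.comm _ _ (cast_sub_ne_one (by omega) (by omega) (by omega))
      (cast_sub_ne_neg_one (by omega) (by omega) (by omega))

lemma V_eplus (hn : 3 ≤ n) (ht4 : t4 ≠ 0) (i : ZMod n) :
    S.eP i * S.eP (i+1) * S.eP i = S.eP i := by
  obtain ⟨k, hk, rfl⟩ := exists_nat (by omega) i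
  rcases Nat.eq_zero_or_pos k with h0 | h1
  · subst h0
    rw [show ((0:ℕ) : ZMod n) = 0 by push_cast; ring, eP_zero, zero_add,
      eP_one S (by omega)]
    exact eplus_0 S (by omega) ht4
  rcases eq_or_lt_of_le (show k ≤ n-1 by omega) with h2 | h2
  · subst h2
    rw [show ((n-1:ℕ) : ZMod n) + 1 = 0 by
        push_cast [Nat.cast_sub (show 1 ≤ n by omega)]
        rw [ZMod.natCast_self]; ring,
      eP_zero, ← neg_one_cast (m := n) (by omega), eP_neg_one S (by omega)]
    exact eplus_m1 S (by omega) ht4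
  · rw [eP_cast S (by omega) h1 (by omega),
      show ((k:ℕ) : ZMod n) + 1 = ((k+1 : ℕ) : ZMod n) by push_cast; ring,
      eP_cast S (by omega) (k := k+1) (by omega) (by omega),
      show ((k+1:ℕ) : ZMod (n+1)) = ((k:ℕ) : ZMod (n+1)) + 1 by push_cast; ring]
    exact S.eplus _

lemma V_eminus (hn : 3 ≤ n) (ht4 : t4 ≠ 0) (i : ZMod n) :
    S.eP i * S.eP (i-1) * S.eP i = S.eP i := by
  obtain ⟨k, hk, rfl⟩ := exists_nat (by omega) i
  rcases Nat.eq_zero_or_pos k with h0 | h1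
  · subst h0
    rw [show ((0:ℕ) : ZMod n) = 0 by push_cast; ring, eP_zero, zero_sub,
      eP_neg_one S (by omega)]
    exact eminus_0 S (by omega) ht4
  rcases eq_or_lt_of_le (show 1 ≤ k from h1) with h2 | h2
  · -- k = 1
    rw [← h2]
    rw [show ((1:ℕ) : ZMod n) - 1 = 0 by push_cast; ring,
      eP_zero, show ((1:ℕ) : ZMod n) = 1 by push_cast; ring, eP_one S (by omega)]
    exact eminus_1 S (by omega) ht4
  · rw [eP_cast S (by omega) h1 (by omega),
      show ((k:ℕ) : ZMod n) - 1 = ((k-1 : ℕ) : ZMod n) by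
        push_cast [Nat.cast_sub (show 1 ≤ k by omega)]; ring,
      eP_cast S (by omega) (k := k-1) (by omega) (by omega),
      show ((k-1:ℕ) : ZMod (n+1)) = ((k:ℕ) : ZMod (n+1)) - 1 by
        push_cast [Nat.cast_sub (show 1 ≤ k by omega)]; ring]
    exact S.eminus _

lemma DD_eP (hn : 3 ≤ n) : ∀ j : ℕ, j + 2 ≤ n - 1 → DD S.eP (j+2) = S.VV j * DD S.eP 2
  | 0, _ => by rw [VV, one_mul]
  | (j+1), h => by
    have h1 : DD S.eP (j+3) = S.eP (1 - ((j+2 : ℕ) : ZMod n)) * DD S.eP (j+2) := rfl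
    have hc : (1 : ZMod n) - ((j+2 : ℕ) : ZMod n) = ((n-(j+1) : ℕ) : ZMod n) := by
      have h0 : ((n:ℕ) : ZMod n) = 0 := ZMod.natCast_self n
      push_cast [Nat.cast_sub (show j+1 ≤ n by omega)]
      rw [h0]; ring
    have hc2 : ((n-(j+1) : ℕ) : ZMod (n+1)) = -((j : ZMod (n+1)) + 2) := by
      have h0 := castn1 (n := n)
      push_cast [Nat.cast_sub (show j+1 ≤ n by omega)]
      rw [h0]; ring
    rw [h1, hc, eP_cast S (by omega) (by omega) (by omega), hc2,
      DD_eP hn j (by omega), ← mul_assoc]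
    conv_rhs => rw [VV]

lemma V_cyc (hn : 3 ≤ n) (ht4 : t4 ≠ 0) :
    (S.rP * S.eP 1) ^ (n - 1) = S.rP ^ n * (S.rP * S.eP 1) := by
  have hre := V_rer S (by omega) ht4
  rw [re_pow S.eP S.rP hre (n-1)]
  -- identify DD eP (n-1)
  have hDD : DD S.eP (n-1) = S.VV (n-3) * (S.W * S.e 1) := by
    rw [show n-1 = (n-3)+2 by omega, DD_eP S hn (n-3) (by omega)]
    have h2 : DD S.eP 2 = S.eP (1 - ((1:ℕ) : ZMod n)) * (S.eP (1 - ((0:ℕ) : ZMod n)) * 1) := rfl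
    rw [h2, show (1 : ZMod n) - ((1:ℕ) : ZMod n) = 0 by push_cast; ring,
      show (1 : ZMod n) - ((0:ℕ) : ZMod n) = 1 by push_cast; ring,
      eP_zero, eP_one S (by omega), mul_one]
  -- the key relation from the target cyclic relation
  have hKey : S.VV (n-3) * (S.q * (S.z * S.e 1)) = S.r * (S.r * S.e 1) := by
    have h := key_target S (by omega : 3 ≤ n+1)
    rw [show n+1-1 = n by omega,
      congrArg (DD S.e) (show n = (n-3)+3 by omega), DD_VV S (n-3), DD3, mul_one] at h
    exact h
  have hK0 := VV_comm0 S (n-3) (by omega)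
  have hK1 := VV_comm1 S (n-3) (by omega)
  have hfin := key_final S (by omega) ht4 (S.VV (n-3)) hK0 hK1 hKey
  rw [hDD, eP_one S (by omega), hfin]
  have hRHS : S.rP ^ n * (S.rP * S.e 1) = S.rP ^ (n-1) * (S.rP * (S.rP * S.e 1)) := by
    simp only [← mul_assoc, ← pow_succ]
    rw [show n-1+1+1 = n+1 by omega, pow_succ]
  rw [hRHS]
  simp only [rP, mul_assoc]

end TLsys


section Assembly
variable (t4 : ℂ) (n : ℕ)

lemma tlsys_e (hm : 3 ≤ n) (i : ZMod n) : (tlsys t4 n hm).e i = E t4 n i := rfl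
lemma tlsys_r (hm : 3 ≤ n) : (tlsys t4 n hm).r = R t4 n := rfl
lemma tlsys_ri (hm : 3 ≤ n) : (tlsys t4 n hm).ri = Ri t4 n := rfl

noncomputable def fgen (hn : 2 ≤ n) : TLgen n → TL t4 (n+1) := fun g =>
  match g with
  | .e i => (tlsys t4 (n+1) (by omega)).eP i
  | .r => (tlsys t4 (n+1) (by omega)).rP
  | .ri => (tlsys t4 (n+1) (by omega)).riP

noncomputable def Gmap (hn : 2 ≤ n) : FA n →ₐ[ℂ] TL t4 (n+1) :=
  FreeAlgebra.lift ℂ (fgen t4 n hn)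

lemma Gmap_e (hn : 2 ≤ n) (i : ZMod n) :
    Gmap t4 n hn (ef n i) = (tlsys t4 (n+1) (by omega)).eP i := by
  simp [Gmap, ef, fgen]

lemma Gmap_r (hn : 2 ≤ n) : Gmap t4 n hn (rf n) = (tlsys t4 (n+1) (by omega)).rP := by
  simp [Gmap, rf, fgen]

lemma Gmap_ri (hn : 2 ≤ n) : Gmap t4 n hn (rif n) = (tlsys t4 (n+1) (by omega)).riP := by
  simp [Gmap, rif, fgen]

lemma Gmap_rel (ht4 : t4 ≠ 0) (hn : 2 ≤ n) :
    ∀ ⦃x y : FA n⦄, TLrel t4 n x y → Gmap t4 n hn x = Gmap t4 n hn y := by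
  intro x y h
  induction h with
  | esq i =>
      simp only [map_mul, map_smul, Gmap_e t4 n hn]
      exact (tlsys t4 (n+1) (by omega)).V_esq hn ht4 i
  | rer i =>
      simp only [map_mul, Gmap_e t4 n hn, Gmap_r t4 n hn]
      exact (tlsys t4 (n+1) (by omega)).V_rer hn ht4 i
  | rri =>
      simp only [map_mul, map_one, Gmap_r t4 n hn, Gmap_ri t4 n hn]
      exact (tlsys t4 (n+1) (by omega)).V_rri ht4
  | rir =>
      simp only [map_mul, map_one, Gmap_r t4 n hn, Gmap_ri t4 n hn]
      exact (tlsys t4 (n+1) (by omega)).V_rir ht4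
  | comm h i j h1 h2 =>
      simp only [map_mul, Gmap_e t4 n hn]
      exact (tlsys t4 (n+1) (by omega)).V_comm h ht4 i j h1 h2
  | eplus h i =>
      simp only [map_mul, Gmap_e t4 n hn]
      exact (tlsys t4 (n+1) (by omega)).V_eplus h ht4 i
  | eminus h i =>
      simp only [map_mul, Gmap_e t4 n hn]
      exact (tlsys t4 (n+1) (by omega)).V_eminus h ht4 i
  | cyc h =>
      simp only [map_mul, map_pow, Gmap_e t4 n hn, Gmap_r t4 n hn]
      exact (tlsys t4 (n+1) (by omega)).V_cyc h ht4
  | two h =>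
      subst h
      simp only [map_mul, Gmap_e t4 2 hn, Gmap_r t4 2 hn]
      have S3 : TLsys (TL t4 3) t4 3 := tlsys t4 3 (by omega)
      rw [(tlsys t4 (2+1) (by omega : 3 ≤ 2+1)).eP_one (by omega)]
      exact TLsys.two_key (tlsys t4 3 (by omega)) ht4

end Assembly

section Final
variable (t4 : ℂ) (n : ℕ)

noncomputable def Ins (ht4 : t4 ≠ 0) (hn : 2 ≤ n) : TL t4 n →ₐ[ℂ] TL t4 (n+1) :=
  RingQuot.liftAlgHom ℂ ⟨Gmap t4 n hn, Gmap_rel t4 n ht4 hn⟩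

lemma Ins_E (ht4 : t4 ≠ 0) (hn : 2 ≤ n) (i : ZMod n) :
    Ins t4 n ht4 hn (E t4 n i) = (tlsys t4 (n+1) (by omega)).eP i := by
  rw [E, Ins, RingQuot.liftAlgHom_mkAlgHom_apply]
  exact Gmap_e t4 n hn i

lemma Ins_R (ht4 : t4 ≠ 0) (hn : 2 ≤ n) :
    Ins t4 n ht4 hn (R t4 n) = (tlsys t4 (n+1) (by omega)).rP := by
  rw [R, Ins, RingQuot.liftAlgHom_mkAlgHom_apply]
  exact Gmap_r t4 n hn

lemma Ins_Ri (ht4 : t4 ≠ 0) (hn : 2 ≤ n) :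
    Ins t4 n ht4 hn (Ri t4 n) = (tlsys t4 (n+1) (by omega)).riP := by
  rw [Ri, Ins, RingQuot.liftAlgHom_mkAlgHom_apply]
  exact Gmap_ri t4 n hn

lemma Ins_cond (ht4 : t4 ≠ 0) (hn : 2 ≤ n) : InsCond t4 n (Ins t4 n ht4 hn) := by
  refine ⟨?_, ?_, ?_, ?_⟩
  · intro i h1 h2
    rw [Ins_E t4 n ht4 hn]
    exact (tlsys t4 (n+1) (by omega)).eP_cast hn h1 h2
  · rw [ZMod.natCast_self, Ins_E t4 n ht4 hn, (tlsys t4 (n+1) (by omega)).eP_zero,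
      TLsys.castn1 (n := n), ZMod.natCast_self]
    rfl
  · rw [Ins_R t4 n ht4 hn, TLsys.castn1 (n := n)]
    rfl
  · rw [Ins_Ri t4 n ht4 hn, TLsys.castn1 (n := n)]
    rfl

theorem statement1' (ht4 : t4 ≠ 0) (hn : 2 ≤ n) :
    ∃! I : TL t4 n →ₐ[ℂ] TL t4 (n + 1), InsCond t4 n I := by
  have hc := Ins_cond t4 n ht4 hn
  refine ⟨Ins t4 n ht4 hn, hc, ?_⟩
  intro J hJ
  apply RingQuot.ringQuot_ext'
  apply FreeAlgebra.hom_ext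
  funext x
  simp only [Function.comp_apply, AlgHom.coe_comp]
  cases x with
  | e i =>
      show J (E t4 n i) = Ins t4 n ht4 hn (E t4 n i)
      obtain ⟨k, hk, rfl⟩ := TLsys.exists_nat (by omega) i
      rcases Nat.eq_zero_or_pos k with h0 | h1
      · subst h0
        rw [show ((0:ℕ) : ZMod n) = ((n:ℕ) : ZMod n) by rw [ZMod.natCast_self]; push_cast; ring]
        exact hJ.2.1.trans hc.2.1.symm
      · exact (hJ.1 k h1 (by omega)).trans (hc.1 k h1 (by omega)).symm
  | r =>
      show J (R t4 n) = Ins t4 n ht4 hn (R t4 n)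
      exact hJ.2.2.1.trans hc.2.2.1.symm
  | ri =>
      show J (Ri t4 n) = Ins t4 n ht4 hn (Ri t4 n)
      exact hJ.2.2.2.trans hc.2.2.2.symm


end Final

/-- for every `n ≥ 2` there is a unique unital ℂ-algebra homomorphism
`I_n : TL_n → TL_{n+1}` satisfying the arc-insertion formulas. -/
theorem statement1 (t4 : ℂ) (ht4 : t4 ≠ 0) (n : ℕ) (hn : 2 ≤ n) :
    ∃! I : TL t4 n →ₐ[ℂ] TL t4 (n + 1), InsCond t4 n I := by
  exact statement1' t4 n ht4 hn

end SkeinTL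
end
end

section
/- Let n ≥ 2 and set d_{n+1} := (t^{1/4}e_n + t^{-1/4})(t^{1/4}e_{n-1} + t^{-1/4})⋯(t^{1/4}e_1 + t^{-1/4})ρ ∈ TL_{n+1}. Then d_{n+1} is invertible in TL_{n+1}, and d_{n+1}·I_n(Z) = I_n(Z)·d_{n+1} for every Z ∈ TL_n; that is, d_{n+1} lies in the centralizer of the image of I_n in TL_{n+1}. -/
noncomputable section

namespace SkeinTL

/-- The element `d_{n+1} = (t^{1/4}e_n + t^{-1/4})(t^{1/4}e_{n-1} + t^{-1/4})⋯(t^{1/4}e_1 + t^{-1/4})ρ`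
of `TL_{n+1}`. -/
def dEl (t4 : ℂ) (n : ℕ) : TL t4 (n + 1) :=
  ((List.range n).map (fun k =>
      t4 • E t4 (n + 1) ((n - k : ℕ) : ZMod (n + 1)) + Ct t4 (n + 1) t4⁻¹)).prod *
    R t4 (n + 1)

section Rels
variable (t4 : ℂ) (N : ℕ)

lemma Esq (i : ZMod N) : E t4 N i * E t4 N i = (-(t4 ^ 2 + t4⁻¹ ^ 2)) • E t4 N i := by
  have h := RingQuot.mkAlgHom_rel ℂ (TLrel.esq (t4 := t4) (n := N) i)
  rw [map_mul, map_smul] at h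
  exact h

lemma RE (i : ZMod N) : R t4 N * E t4 N i = E t4 N (i + 1) * R t4 N := by
  have h := RingQuot.mkAlgHom_rel ℂ (TLrel.rer (t4 := t4) (n := N) i)
  rw [map_mul, map_mul] at h
  exact h

lemma RRi : R t4 N * Ri t4 N = 1 := by
  have h := RingQuot.mkAlgHom_rel ℂ (TLrel.rri (t4 := t4) (n := N))
  rw [map_mul, map_one] at h
  exact h

lemma RiR : Ri t4 N * R t4 N = 1 := by
  have h := RingQuot.mkAlgHom_rel ℂ (TLrel.rir (t4 := t4) (n := N))
  rw [map_mul, map_one] at h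
  exact h

lemma Ecomm (h : 3 ≤ N) (i j : ZMod N) (h1 : i - j ≠ 1) (h2 : i - j ≠ -1) :
    E t4 N i * E t4 N j = E t4 N j * E t4 N i := by
  have h := RingQuot.mkAlgHom_rel ℂ (TLrel.comm (t4 := t4) h i j h1 h2)
  rw [map_mul, map_mul] at h
  exact h

lemma Eplus (h : 3 ≤ N) (i : ZMod N) :
    E t4 N i * E t4 N (i + 1) * E t4 N i = E t4 N i := by
  have h := RingQuot.mkAlgHom_rel ℂ (TLrel.eplus (t4 := t4) h i)
  rw [map_mul, map_mul] at h
  exact h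

lemma Eminus (h : 3 ≤ N) (i : ZMod N) :
    E t4 N i * E t4 N (i - 1) * E t4 N i = E t4 N i := by
  have h := RingQuot.mkAlgHom_rel ℂ (TLrel.eminus (t4 := t4) h i)
  rw [map_mul, map_mul] at h
  exact h

end Rels

/-- `F_i = t^{1/4} e_i + t^{-1/4}`. -/
def Fu (t4 : ℂ) (N : ℕ) (i : ZMod N) : TL t4 N := t4 • E t4 N i + Ct t4 N t4⁻¹
/-- `G_i = t^{-1/4} e_i + t^{1/4}`, the inverse of `F_i`. -/
def Gu (t4 : ℂ) (N : ℕ) (i : ZMod N) : TL t4 N := t4⁻¹ • E t4 N i + Ct t4 N t4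

section Units
variable {t4 : ℂ} {N : ℕ}

lemma FG (ht4 : t4 ≠ 0) (i : ZMod N) : Fu t4 N i * Gu t4 N i = 1 := by
  have h := Esq t4 N i
  simp only [Fu, Gu, Ct, Algebra.algebraMap_eq_smul_one, mul_add, add_mul, smul_mul_assoc,
    mul_smul_comm, smul_smul, mul_one, one_mul]
  rw [h]
  match_scalars <;> field_simp <;> ring

lemma GF (ht4 : t4 ≠ 0) (i : ZMod N) : Gu t4 N i * Fu t4 N i = 1 := by
  have h := Esq t4 N i
  simp only [Fu, Gu, Ct, Algebra.algebraMap_eq_smul_one, mul_add, add_mul, smul_mul_assoc,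
    mul_smul_comm, smul_smul, mul_one, one_mul]
  rw [h]
  match_scalars <;> field_simp <;> ring

lemma isUnit_F (ht4 : t4 ≠ 0) (i : ZMod N) : IsUnit (Fu t4 N i) :=
  ⟨⟨Fu t4 N i, Gu t4 N i, FG ht4 i, GF ht4 i⟩, rfl⟩

lemma isUnit_R : IsUnit (R t4 N) := ⟨⟨R t4 N, Ri t4 N, RRi t4 N, RiR t4 N⟩, rfl⟩

lemma key1 (ht4 : t4 ≠ 0) (hN : 3 ≤ N) (i : ZMod N) :
    Fu t4 N (i + 1) * Fu t4 N i * E t4 N (i + 1) = E t4 N i * E t4 N (i + 1) := by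
  have h1 := Eminus t4 N hN (i + 1)
  rw [add_sub_cancel_right] at h1
  have h2 := Esq t4 N (i + 1)
  simp only [Fu, Ct, Algebra.algebraMap_eq_smul_one, mul_add, add_mul, smul_mul_assoc,
    mul_smul_comm, smul_smul, mul_one, one_mul, ← mul_assoc]
  rw [h1, h2]
  match_scalars <;> field_simp <;> ring

lemma key2 (ht4 : t4 ≠ 0) (hN : 3 ≤ N) (i : ZMod N) :
    E t4 N i * (Fu t4 N (i + 1) * Fu t4 N i) = E t4 N i * E t4 N (i + 1) := by
  have h1 := Eplus t4 N hN i
  have h2 := Esq t4 N i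
  simp only [Fu, Ct, Algebra.algebraMap_eq_smul_one, mul_add, add_mul, smul_mul_assoc,
    mul_smul_comm, smul_smul, mul_one, one_mul, ← mul_assoc]
  rw [h1, h2]
  match_scalars <;> field_simp <;> ring

lemma key3 (ht4 : t4 ≠ 0) (hN : 3 ≤ N) (i : ZMod N) :
    E t4 N i * E t4 N (i + 1) * Gu t4 N i = E t4 N i * Fu t4 N (i + 1) := by
  have h1 := Eplus t4 N hN i
  simp only [Fu, Gu, Ct, Algebra.algebraMap_eq_smul_one, mul_add, add_mul, smul_mul_assoc,
    mul_smul_comm, smul_smul, mul_one, one_mul, ← mul_assoc]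
  rw [h1]
  match_scalars <;> field_simp <;> ring

end Units

/-- `Uu s m = F_{s+m} F_{s+m-1} ⋯ F_{s+1}` (`m` factors). -/
def Uu (t4 : ℂ) (N : ℕ) (s : ℕ) : ℕ → TL t4 N
  | 0 => 1
  | m + 1 => Fu t4 N ((s + m + 1 : ℕ) : ZMod N) * Uu t4 N s m

section Cast
variable {t4 : ℂ} {N : ℕ}

lemma natCast_ne (hN : 0 < N) {a b : ℕ} (ha : a < N) (hb : b < N) (hab : a ≠ b) :
    (a : ZMod N) ≠ (b : ZMod N) := by
  haveI : NeZero N := ⟨by omega⟩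
  intro h
  exact hab (by simpa [ZMod.val_natCast_of_lt ha, ZMod.val_natCast_of_lt hb] using congrArg ZMod.val h)

lemma neg_one_cast (hN : 1 ≤ N) : ((N - 1 : ℕ) : ZMod N) = -1 := by
  have : ((N - 1 : ℕ) : ZMod N) + 1 = 0 := by
    rw [← Nat.cast_one (R := ZMod N), ← Nat.cast_add, Nat.sub_add_cancel hN, ZMod.natCast_self]
  linear_combination this

/-- Non-adjacent generators (given as naturals) commute. -/
lemma Ecomm_nat (hN : 3 ≤ N) {j k : ℕ} (h1 : k + 2 ≤ j) (h2 : j ≤ k + (N - 2)) :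
    E t4 N (j : ZMod N) * E t4 N (k : ZMod N) = E t4 N (k : ZMod N) * E t4 N (j : ZMod N) := by
  have hd : (j : ZMod N) - (k : ZMod N) = ((j - k : ℕ) : ZMod N) := by
    rw [Nat.cast_sub (by omega)]
  refine Ecomm t4 N hN _ _ ?_ ?_
  · rw [hd, show (1 : ZMod N) = ((1 : ℕ) : ZMod N) by simp]
    exact natCast_ne (by omega) (by omega) (by omega) (by omega)
  · rw [hd, ← neg_one_cast (by omega)]
    exact natCast_ne (by omega) (by omega) (by omega) (by omega)

end Cast

section Prod
variable {t4 : ℂ} {N : ℕ}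

lemma Uu_succ (s m : ℕ) :
    Uu t4 N s (m + 1) = Fu t4 N ((s + m + 1 : ℕ) : ZMod N) * Uu t4 N s m := rfl

/-- Split off the rightmost factor. -/
lemma Uu_split (s : ℕ) : ∀ m : ℕ, Uu t4 N s (m + 1) = Uu t4 N (s + 1) m * Fu t4 N ((s + 1 : ℕ) : ZMod N)
  | 0 => by simp [Uu_succ, Uu]
  | m + 1 => by
    have h : (s + 1 + m + 1 : ℕ) = s + (m + 1) + 1 := by omega
    rw [Uu_succ, Uu_split s m, ← mul_assoc, Uu_succ, h]

/-- Commuting an element past the product `Uu`. -/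
lemma comm_Uu (s : ℕ) (x : TL t4 N) : ∀ m : ℕ,
    (∀ k : ℕ, s + 1 ≤ k → k ≤ s + m → x * E t4 N (k : ZMod N) = E t4 N (k : ZMod N) * x) →
    x * Uu t4 N s m = Uu t4 N s m * x
  | 0, _ => by simp [Uu]
  | m + 1, h => by
    have hF : x * Fu t4 N ((s + m + 1 : ℕ) : ZMod N) = Fu t4 N ((s + m + 1 : ℕ) : ZMod N) * x := by
      simp only [Fu, Ct, Algebra.algebraMap_eq_smul_one, mul_add, add_mul, mul_smul_comm,
        smul_mul_assoc, mul_one, one_mul]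
      rw [h (s + m + 1) (by omega) (by omega)]
    rw [Uu_succ, ← mul_assoc, hF, mul_assoc,
      comm_Uu s x m (fun k hk1 hk2 => h k hk1 (by omega)), ← mul_assoc]

/-- `ρ` shifts the product `Uu`. -/
lemma shift_Uu : ∀ m s : ℕ, R t4 N * Uu t4 N s m = Uu t4 N (s + 1) m * R t4 N
  | 0, s => by simp [Uu]
  | m + 1, s => by
    have hF : R t4 N * Fu t4 N ((s + m + 1 : ℕ) : ZMod N)
        = Fu t4 N ((s + 1 + m + 1 : ℕ) : ZMod N) * R t4 N := by
      simp only [Fu, Ct, Algebra.algebraMap_eq_smul_one, mul_add, add_mul, mul_smul_comm,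
        smul_mul_assoc, mul_one, one_mul]
      rw [RE]
      congr 2
      push_cast
      ring
    rw [Uu_succ, ← mul_assoc, hF, mul_assoc, shift_Uu m s, ← mul_assoc, Uu_succ]

lemma isUnit_Uu (ht4 : t4 ≠ 0) (s : ℕ) : ∀ m : ℕ, IsUnit (Uu t4 N s m)
  | 0 => isUnit_one
  | m + 1 => ((isUnit_F ht4 _).mul (isUnit_Uu ht4 s m))

end Prod

section DEq
variable {t4 : ℂ} {n : ℕ}

lemma dEl_eq (hn : 1 ≤ n) : dEl t4 n = Uu t4 (n + 1) 0 n * R t4 (n + 1) := by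
  suffices h : ∀ m, m ≤ n → ((List.range m).map (fun k =>
      t4 • E t4 (n + 1) ((n - k : ℕ) : ZMod (n + 1)) + Ct t4 (n + 1) t4⁻¹)).prod
        * Uu t4 (n + 1) 0 (n - m) = Uu t4 (n + 1) 0 n by
    have := h n le_rfl
    simp only [Nat.sub_self] at this
    rw [dEl, ← this, show Uu t4 (n+1) 0 0 = 1 from rfl, mul_one]
  intro m hm
  induction m with
  | zero => simp
  | succ m ih =>
    rw [List.range_succ, List.map_append, List.prod_append]
    simp only [List.map_cons, List.map_nil, List.prod_cons, List.prod_nil, mul_one]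
    have h1 : n - m = (n - (m + 1)) + 1 := by omega
    have h3 : (n - m : ℕ) = 0 + (n - (m + 1)) + 1 := by omega
    have h2 : t4 • E t4 (n + 1) ((n - m : ℕ) : ZMod (n + 1)) + Ct t4 (n + 1) t4⁻¹
        = Fu t4 (n + 1) ((0 + (n - (m + 1)) + 1 : ℕ) : ZMod (n + 1)) := by
      rw [Fu, h3]
    rw [h2, mul_assoc, ← Uu_succ, ← h1, ih (by omega)]

end DEq

section MoreComm
variable {t4 : ℂ} {N : ℕ}

lemma Fcomm {x : TL t4 N} {j : ZMod N} (h : x * E t4 N j = E t4 N j * x) :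
    x * Fu t4 N j = Fu t4 N j * x := by
  simp only [Fu, Ct, Algebra.algebraMap_eq_smul_one, mul_add, add_mul, mul_smul_comm,
    smul_mul_assoc, mul_one, one_mul, h]

lemma RFu (j : ZMod N) : R t4 N * Fu t4 N j = Fu t4 N (j + 1) * R t4 N := by
  simp only [Fu, Ct, Algebra.algebraMap_eq_smul_one, mul_add, add_mul, mul_smul_comm,
    smul_mul_assoc, mul_one, one_mul, RE]

lemma RGu (j : ZMod N) : R t4 N * Gu t4 N j = Gu t4 N (j + 1) * R t4 N := by
  simp only [Gu, Ct, Algebra.algebraMap_eq_smul_one, mul_add, add_mul, mul_smul_comm,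
    smul_mul_assoc, mul_one, one_mul, RE]

end MoreComm

/-- Main commutation: `(F_m ⋯ F_1) e_{i+1} = e_i (F_m ⋯ F_1)` for `1 ≤ i ≤ m - 1 ≤ n - 1`. -/
lemma mainA {t4 : ℂ} {n : ℕ} (ht4 : t4 ≠ 0) (hn : 2 ≤ n) :
    ∀ m : ℕ, m ≤ n → ∀ i : ℕ, 1 ≤ i → i + 1 ≤ m →
    Uu t4 (n + 1) 0 m * E t4 (n + 1) ((i + 1 : ℕ) : ZMod (n + 1))
      = E t4 (n + 1) ((i : ℕ) : ZMod (n + 1)) * Uu t4 (n + 1) 0 m := by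
  have hN : 3 ≤ n + 1 := by omega
  intro m
  induction m with
  | zero => intro _ i _ h; omega
  | succ m ih =>
    intro hm i hi him
    have hz : (0 + m + 1 : ℕ) = m + 1 := by omega
    by_cases hcase : i + 1 ≤ m
    · have hxF : E t4 (n + 1) ((i : ℕ) : ZMod (n + 1)) * Fu t4 (n + 1) ((m + 1 : ℕ) : ZMod (n + 1))
          = Fu t4 (n + 1) ((m + 1 : ℕ) : ZMod (n + 1)) * E t4 (n + 1) ((i : ℕ) : ZMod (n + 1)) :=
        Fcomm (Ecomm_nat hN (j := m + 1) (k := i) (by omega) (by omega)).symm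
      rw [Uu_succ, hz, mul_assoc, ih (by omega) i hi hcase, ← mul_assoc, ← hxF, mul_assoc]
    · obtain rfl : i = m := by omega
      have hm1 : i = (i - 1) + 1 := by omega
      have hidx : (0 + (i - 1) + 1 : ℕ) = i := by omega
      have hsp : Uu t4 (n + 1) 0 i
          = Fu t4 (n + 1) ((i : ℕ) : ZMod (n + 1)) * Uu t4 (n + 1) 0 (i - 1) := by
        conv_lhs => rw [hm1]
        rw [Uu_succ, hidx]
      have hcP : E t4 (n + 1) ((i + 1 : ℕ) : ZMod (n + 1)) * Uu t4 (n + 1) 0 (i - 1)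
          = Uu t4 (n + 1) 0 (i - 1) * E t4 (n + 1) ((i + 1 : ℕ) : ZMod (n + 1)) :=
        comm_Uu 0 _ (i - 1) (fun k hk1 hk2 => Ecomm_nat hN (by omega) (by omega))
      have hc1 : ((i + 1 : ℕ) : ZMod (n + 1)) = ((i : ℕ) : ZMod (n + 1)) + 1 := by
        push_cast; ring
      rw [hc1] at hcP
      have k1 := key1 (t4 := t4) (N := n + 1) ht4 hN ((i : ℕ) : ZMod (n + 1))
      have k2 := key2 (t4 := t4) (N := n + 1) ht4 hN ((i : ℕ) : ZMod (n + 1))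
      rw [Uu_succ, hz, hsp, hc1]
      rw [← mul_assoc, mul_assoc _ (Uu t4 (n + 1) 0 (i - 1)), ← hcP, ← mul_assoc, k1, ← mul_assoc, k2]


/-- for `n ≥ 2` the element `d_{n+1}` is invertible in `TL_{n+1}` and
commutes with every element of the image of `I_n`. -/
theorem statement2 (t4 : ℂ) (ht4 : t4 ≠ 0) (n : ℕ) (hn : 2 ≤ n) :
    IsUnit (dEl t4 n) ∧
    ∀ I : TL t4 n →ₐ[ℂ] TL t4 (n + 1), InsCond t4 n I →
      ∀ Z : TL t4 n, dEl t4 n * I Z = I Z * dEl t4 n := by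
  have hN : 3 ≤ n + 1 := by omega
  have hd : dEl t4 n = Uu t4 (n + 1) 0 n * R t4 (n + 1) := dEl_eq (by omega)
  have h00 : ((n + 1 : ℕ) : ZMod (n + 1)) = 0 := ZMod.natCast_self _
  have h0 : ((n : ℕ) : ZMod (n + 1)) + 1 = 0 := by
    have h := h00
    push_cast at h
    linear_combination h
  have hsplit1 : Uu t4 (n + 1) 0 n = Uu t4 (n + 1) 1 (n - 1) * Fu t4 (n + 1) 1 := by
    have h := Uu_split (t4 := t4) (N := n + 1) 0 (n - 1)
    rw [show n - 1 + 1 = n by omega] at h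
    norm_num at h
    exact h
  have hsucc1 : Uu t4 (n + 1) 0 n
      = Fu t4 (n + 1) ((n : ℕ) : ZMod (n + 1)) * Uu t4 (n + 1) 0 (n - 1) := by
    have h := Uu_succ (t4 := t4) (N := n + 1) 0 (n - 1)
    rw [show (0 + (n - 1) + 1 : ℕ) = n by omega, show n - 1 + 1 = n by omega] at h
    exact h
  have hsplit2 : Uu t4 (n + 1) 0 (n - 1) = Uu t4 (n + 1) 1 (n - 2) * Fu t4 (n + 1) 1 := by
    have h := Uu_split (t4 := t4) (N := n + 1) 0 (n - 2)
    rw [show n - 2 + 1 = n - 1 by omega] at h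
    norm_num at h
    exact h
  have hsucc2 : Uu t4 (n + 1) 1 (n - 1)
      = Fu t4 (n + 1) ((n : ℕ) : ZMod (n + 1)) * Uu t4 (n + 1) 1 (n - 2) := by
    have h := Uu_succ (t4 := t4) (N := n + 1) 1 (n - 2)
    rw [show (1 + (n - 2) + 1 : ℕ) = n by omega, show n - 2 + 1 = n - 1 by omega] at h
    exact h
  have hGnUn : Gu t4 (n + 1) ((n : ℕ) : ZMod (n + 1)) * Uu t4 (n + 1) 0 n
      = Uu t4 (n + 1) 0 (n - 1) := by
    rw [hsucc1, ← mul_assoc, GF ht4, one_mul]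
  constructor
  · rw [hd]
    exact (isUnit_Uu ht4 0 n).mul isUnit_R
  · intro I hI Z
    obtain ⟨hE1, hE0, hR, hRi⟩ := hI
    -- commutation with I ρ
    have cR' : dEl t4 n * I (R t4 n) = I (R t4 n) * dEl t4 n := by
      rw [hR, hd]
      rw [show (t4⁻¹ • E t4 (n + 1) ((n : ℕ) : ZMod (n + 1)) + Ct t4 (n + 1) t4)
        = Gu t4 (n + 1) ((n : ℕ) : ZMod (n + 1)) from rfl]
      have l1 : R t4 (n + 1) * Gu t4 (n + 1) ((n : ℕ) : ZMod (n + 1))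
          = Gu t4 (n + 1) 0 * R t4 (n + 1) := by rw [RGu, h0]
      have l2 : R t4 (n + 1) * Gu t4 (n + 1) 0 = Gu t4 (n + 1) 1 * R t4 (n + 1) := by
        rw [RGu, zero_add]
      simp only [mul_assoc]
      rw [l1, ← mul_assoc (R t4 (n + 1)) (Gu t4 (n + 1) 0), l2]
      simp only [mul_assoc]
      rw [← mul_assoc (Gu t4 (n + 1) ((n : ℕ) : ZMod (n + 1))) (Uu t4 (n + 1) 0 n), hGnUn,
        ← mul_assoc (R t4 (n + 1)) (Uu t4 (n + 1) 0 (n - 1)), shift_Uu,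
        show (0 + 1 : ℕ) = 1 by norm_num]
      rw [← mul_assoc (Uu t4 (n + 1) 0 n) (Gu t4 (n + 1) 1), hsplit1,
        mul_assoc (Uu t4 (n + 1) 1 (n - 1)), FG ht4, mul_one]
      simp only [mul_assoc]
    -- commutation with I ρ⁻¹
    have hu : I (R t4 n) * I (Ri t4 n) = 1 := by rw [← map_mul, RRi, map_one]
    have hv : I (Ri t4 n) * I (R t4 n) = 1 := by rw [← map_mul, RiR, map_one]
    have cRi' : dEl t4 n * I (Ri t4 n) = I (Ri t4 n) * dEl t4 n := by
      calc dEl t4 n * I (Ri t4 n)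
          = 1 * (dEl t4 n * I (Ri t4 n)) := (one_mul _).symm
        _ = (I (Ri t4 n) * I (R t4 n)) * (dEl t4 n * I (Ri t4 n)) := by rw [hv]
        _ = I (Ri t4 n) * ((I (R t4 n) * dEl t4 n) * I (Ri t4 n)) := by
            simp only [mul_assoc]
        _ = I (Ri t4 n) * ((dEl t4 n * I (R t4 n)) * I (Ri t4 n)) := by rw [cR']
        _ = I (Ri t4 n) * (dEl t4 n * (I (R t4 n) * I (Ri t4 n))) := by
            simp only [mul_assoc]
        _ = I (Ri t4 n) * dEl t4 n := by rw [hu, mul_one]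
    -- commutation with I e_i
    have cE : ∀ i : ZMod n, dEl t4 n * I (E t4 n i) = I (E t4 n i) * dEl t4 n := by
      haveI : NeZero n := ⟨by omega⟩
      intro i
      have hiv : ((i.val : ℕ) : ZMod n) = i := ZMod.natCast_rightInverse i
      rcases Nat.eq_zero_or_pos i.val with hz0 | hpos
      · -- i = 0, use the e_n clause
        have hi0 : i = ((n : ℕ) : ZMod n) := by
          rw [ZMod.natCast_self, ← hiv, hz0, Nat.cast_zero]
        rw [hi0, hE0, hd]
        rw [show (t4 • E t4 (n + 1) ((n : ℕ) : ZMod (n + 1)) + Ct t4 (n + 1) t4⁻¹)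
          = Fu t4 (n + 1) ((n : ℕ) : ZMod (n + 1)) from rfl]
        rw [show (t4⁻¹ • E t4 (n + 1) ((n : ℕ) : ZMod (n + 1)) + Ct t4 (n + 1) t4)
          = Gu t4 (n + 1) ((n : ℕ) : ZMod (n + 1)) from rfl]
        rw [h00]
        have m1 : R t4 (n + 1) * Fu t4 (n + 1) ((n : ℕ) : ZMod (n + 1))
            = Fu t4 (n + 1) 0 * R t4 (n + 1) := by rw [RFu, h0]
        have m2 : R t4 (n + 1) * E t4 (n + 1) 0 = E t4 (n + 1) 1 * R t4 (n + 1) := by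
          rw [RE, zero_add]
        have m3 : R t4 (n + 1) * Gu t4 (n + 1) ((n : ℕ) : ZMod (n + 1))
            = Gu t4 (n + 1) 0 * R t4 (n + 1) := by rw [RGu, h0]
        have k1' := key1 (t4 := t4) (N := n + 1) ht4 hN 0
        rw [zero_add] at k1'
        have k3' := key3 (t4 := t4) (N := n + 1) ht4 hN 0
        rw [zero_add] at k3'
        have hcE0U : E t4 (n + 1) 0 * Uu t4 (n + 1) 1 (n - 2)
            = Uu t4 (n + 1) 1 (n - 2) * E t4 (n + 1) 0 := by
          refine comm_Uu 1 _ (n - 2) (fun k hk1 hk2 => ?_)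
          rw [← h00]
          exact Ecomm_nat hN (by omega) (by omega)
        simp only [mul_assoc]
        rw [← mul_assoc (R t4 (n + 1)) (Fu t4 (n + 1) ((n : ℕ) : ZMod (n + 1))), m1]
        simp only [mul_assoc]
        rw [← mul_assoc (R t4 (n + 1)) (E t4 (n + 1) 0), m2]
        simp only [mul_assoc]
        rw [m3]
        rw [← mul_assoc (Gu t4 (n + 1) ((n : ℕ) : ZMod (n + 1))) (Uu t4 (n + 1) 0 n), hGnUn]
        rw [hsplit2]
        simp only [mul_assoc]
        rw [← mul_assoc (E t4 (n + 1) 0) (Uu t4 (n + 1) 1 (n - 2)), hcE0U]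
        simp only [mul_assoc]
        rw [hsplit1]
        simp only [mul_assoc]
        rw [← mul_assoc (Fu t4 (n + 1) 1) (Fu t4 (n + 1) 0),
          ← mul_assoc (Fu t4 (n + 1) 1 * Fu t4 (n + 1) 0) (E t4 (n + 1) 1), k1',
          ← mul_assoc (E t4 (n + 1) 0 * E t4 (n + 1) 1) (Gu t4 (n + 1) 0), k3']
        rw [hsucc2]
        simp only [mul_assoc]
      · -- 1 ≤ i.val ≤ n - 1, use the first clause
        have hlt : i.val ≤ n - 1 := by
          have := ZMod.val_lt i
          omega
        rw [← hiv, hE1 i.val hpos hlt, hd]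
        have hri : R t4 (n + 1) * E t4 (n + 1) ((i.val : ℕ) : ZMod (n + 1))
            = E t4 (n + 1) ((i.val + 1 : ℕ) : ZMod (n + 1)) * R t4 (n + 1) := by
          rw [RE, show ((i.val : ℕ) : ZMod (n + 1)) + 1 = ((i.val + 1 : ℕ) : ZMod (n + 1)) by
            push_cast; ring]
        simp only [mul_assoc]
        rw [hri, ← mul_assoc (Uu t4 (n + 1) 0 n) (E t4 (n + 1) ((i.val + 1 : ℕ) : ZMod (n + 1))),
          mainA ht4 hn n le_rfl i.val hpos (by omega), mul_assoc]
    -- reduce to generators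
    obtain ⟨x, rfl⟩ := RingQuot.mkAlgHom_surjective ℂ (TLrel t4 n) Z
    induction x using FreeAlgebra.induction with
    | grade0 r =>
      simp only [AlgHom.commutes]
      exact (Algebra.commutes r _).symm
    | grade1 g =>
      cases g with
      | e i => exact cE i
      | r => exact cR'
      | ri => exact cRi'
    | mul a b iha ihb =>
      simp only [map_mul]
      rw [← mul_assoc, iha, mul_assoc, ihb, ← mul_assoc]
    | add a b iha ihb =>
      simp only [map_add, mul_add, add_mul, iha, ihb]


end SkeinTL
end
end

section
/- The algebra TL_2 is spanned as a ℂ-vector space by the set {ρ^m : m ∈ ℤ} ∪ {(e_2e_1)^k, ρ(e_2e_1)^k, e_1(e_2e_1)^k, ρe_1(e_2e_1)^k : k ∈ ℤ_{≥0}} ∪ {(e_1e_2)^k, ρ(e_1e_2)^k, e_2(e_1e_2)^k, ρe_2(e_1e_2)^k : k ∈ ℤ_{≥0}}. -/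
noncomputable section

namespace SkeinTL

section Aux
variable (t4 : ℂ)

local notation "e₁" => E t4 2 1
local notation "e₂" => E t4 2 2
local notation "ρ" => R t4 2
local notation "ρi" => Ri t4 2
local notation "δ" => (-(t4 ^ 2 + t4⁻¹ ^ 2) : ℂ)
local notation "α" => (E t4 2 2 * E t4 2 1)
local notation "β" => (E t4 2 1 * E t4 2 2)

lemma rel {x y : FA 2} (h : TLrel t4 2 x y) :
    RingQuot.mkAlgHom ℂ (TLrel t4 2) x = RingQuot.mkAlgHom ℂ (TLrel t4 2) y :=
  RingQuot.mkAlgHom_rel ℂ h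

lemma Esq_s4 (i : ZMod 2) : E t4 2 i * E t4 2 i = δ • E t4 2 i := by
  have h := rel t4 (TLrel.esq (t4 := t4) (n := 2) i)
  simpa [E, map_mul, map_smul] using h

lemma re1 : ρ * e₁ = e₂ * ρ := by
  have h := rel t4 (TLrel.rer (t4 := t4) (n := 2) 1)
  rw [show ((1 : ZMod 2) + 1) = 2 by decide] at h
  simpa [E, R, map_mul] using h

lemma re2 : ρ * e₂ = e₁ * ρ := by
  have h := rel t4 (TLrel.rer (t4 := t4) (n := 2) 2)
  rw [show ((2 : ZMod 2) + 1) = 1 by decide] at h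
  simpa [E, R, map_mul] using h

lemma rri : ρ * ρi = 1 := by
  have h := rel t4 (TLrel.rri (t4 := t4) (n := 2))
  simpa [R, Ri, map_mul, map_one] using h

lemma rir : ρi * ρ = 1 := by
  have h := rel t4 (TLrel.rir (t4 := t4) (n := 2))
  simpa [R, Ri, map_mul, map_one] using h

lemma rre1 : ρ * ρ * e₁ = e₁ := by
  have h := rel t4 (TLrel.two (t4 := t4) (n := 2) rfl)
  simpa [R, E, map_mul] using h

lemma re1ri : ρ * e₁ * ρi = e₂ := by
  rw [re1, mul_assoc, rri, mul_one]

lemma rre2 : ρ * ρ * e₂ = e₂ := by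
  calc ρ * ρ * e₂ = ρ * ρ * (ρ * e₁ * ρi) := by rw [re1ri]
    _ = ρ * (ρ * ρ * e₁) * ρi := by simp only [mul_assoc]
    _ = ρ * e₁ * ρi := by rw [rre1]
    _ = e₂ := re1ri t4

lemma e1r : e₁ * ρ = ρ * e₂ := (re2 t4).symm

lemma e2r : e₂ * ρ = ρ * e₁ := (re1 t4).symm

lemma e1rr : e₁ * ρ * ρ = e₁ := by
  rw [e1r, mul_assoc, e2r, ← mul_assoc, rre1]

lemma e2rr : e₂ * ρ * ρ = e₂ := by
  rw [e2r, mul_assoc, e1r, ← mul_assoc, rre2]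

lemma rie1 : ρi * e₁ = ρ * e₁ := by
  calc ρi * e₁ = ρi * (ρ * ρ * e₁) := by rw [rre1]
    _ = ρi * ρ * (ρ * e₁) := by simp only [mul_assoc]
    _ = ρ * e₁ := by rw [rir, one_mul]

lemma rie2 : ρi * e₂ = ρ * e₂ := by
  calc ρi * e₂ = ρi * (ρ * ρ * e₂) := by rw [rre2]
    _ = ρi * ρ * (ρ * e₂) := by simp only [mul_assoc]
    _ = ρ * e₂ := by rw [rir, one_mul]

lemma e1ri : e₁ * ρi = e₁ * ρ := by
  calc e₁ * ρi = e₁ * ρ * ρ * ρi := by rw [e1rr]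
    _ = e₁ * ρ * (ρ * ρi) := by simp only [mul_assoc]
    _ = e₁ * ρ := by rw [rri, mul_one]

lemma e2ri : e₂ * ρi = e₂ * ρ := by
  calc e₂ * ρi = e₂ * ρ * ρ * ρi := by rw [e2rr]
    _ = e₂ * ρ * (ρ * ρi) := by simp only [mul_assoc]
    _ = e₂ * ρ := by rw [rri, mul_one]

lemma a_r : α * ρ = ρ * β := by
  rw [mul_assoc, e1r, ← mul_assoc, e2r, mul_assoc]

lemma b_r : β * ρ = ρ * α := by
  rw [mul_assoc, e2r, ← mul_assoc, e1r, mul_assoc]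

lemma ak_r (k : ℕ) : α ^ k * ρ = ρ * β ^ k := by
  induction k with
  | zero => simp
  | succ n ih =>
    rw [pow_succ, mul_assoc, a_r, ← mul_assoc, ih, mul_assoc, ← pow_succ]

lemma bk_r (k : ℕ) : β ^ k * ρ = ρ * α ^ k := by
  induction k with
  | zero => simp
  | succ n ih =>
    rw [pow_succ, mul_assoc, b_r, ← mul_assoc, ih, mul_assoc, ← pow_succ]

lemma a_e1 : α * e₁ = δ • α := by
  rw [mul_assoc, Esq_s4, mul_smul_comm]

lemma b_e2 : β * e₂ = δ • β := by
  rw [mul_assoc, Esq_s4, mul_smul_comm]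

lemma ak_e1 (k : ℕ) : α ^ (k + 1) * e₁ = δ • α ^ (k + 1) := by
  rw [pow_succ, mul_assoc, a_e1, mul_smul_comm, ← pow_succ]

lemma bk_e2 (k : ℕ) : β ^ (k + 1) * e₂ = δ • β ^ (k + 1) := by
  rw [pow_succ, mul_assoc, b_e2, mul_smul_comm, ← pow_succ]

lemma rr_ak (k : ℕ) : ρ * ρ * α ^ (k + 1) = α ^ (k + 1) := by
  rw [pow_succ']
  calc ρ * ρ * (α * α ^ k) = (ρ * ρ * e₂) * (e₁ * α ^ k) := by simp only [mul_assoc]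
    _ = α * α ^ k := by rw [rre2, mul_assoc]

lemma rr_bk (k : ℕ) : ρ * ρ * β ^ (k + 1) = β ^ (k + 1) := by
  rw [pow_succ']
  calc ρ * ρ * (β * β ^ k) = (ρ * ρ * e₁) * (e₂ * β ^ k) := by simp only [mul_assoc]
    _ = β * β ^ k := by rw [rre1, mul_assoc]

lemma bk_e1 (k : ℕ) : β ^ k * e₁ = e₁ * α ^ k := by
  have h : SemiconjBy e₁ α β := (mul_assoc e₁ e₂ e₁).symm
  exact (h.pow_right k).symm

lemma ak_e2 (k : ℕ) : α ^ k * e₂ = e₂ * β ^ k := by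
  have h : SemiconjBy e₂ β α := (mul_assoc e₂ e₁ e₂).symm
  exact (h.pow_right k).symm

lemma e2bk_e1 (k : ℕ) : e₂ * β ^ k * e₁ = α ^ (k + 1) := by
  rw [mul_assoc, bk_e1, ← mul_assoc, ← pow_succ']

lemma e1ak_e2 (k : ℕ) : e₁ * α ^ k * e₂ = β ^ (k + 1) := by
  rw [mul_assoc, ak_e2, ← mul_assoc, ← pow_succ']

lemma rm_e1 (m : ℕ) : ρ ^ m * e₁ = e₁ ∨ ρ ^ m * e₁ = ρ * e₁ := by
  induction m with
  | zero => left; simp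
  | succ n ih =>
    rw [pow_succ', mul_assoc]
    rcases ih with h | h
    · right; rw [h]
    · left; rw [h, ← mul_assoc, rre1]

lemma rm_e2 (m : ℕ) : ρ ^ m * e₂ = e₂ ∨ ρ ^ m * e₂ = ρ * e₂ := by
  induction m with
  | zero => left; simp
  | succ n ih =>
    rw [pow_succ', mul_assoc]
    rcases ih with h | h
    · right; rw [h]
    · left; rw [h, ← mul_assoc, rre2]

lemma rim_e1 (m : ℕ) : ρi ^ m * e₁ = e₁ ∨ ρi ^ m * e₁ = ρ * e₁ := by
  induction m with
  | zero => left; simp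
  | succ n ih =>
    rw [pow_succ', mul_assoc]
    rcases ih with h | h
    · right; rw [h, rie1]
    · left; rw [h, ← mul_assoc, rir, one_mul]

lemma rim_e2 (m : ℕ) : ρi ^ m * e₂ = e₂ ∨ ρi ^ m * e₂ = ρ * e₂ := by
  induction m with
  | zero => left; simp
  | succ n ih =>
    rw [pow_succ', mul_assoc]
    rcases ih with h | h
    · right; rw [h, rie2]
    · left; rw [h, ← mul_assoc, rir, one_mul]

lemma rim_r (m : ℕ) : ρi ^ (m + 1) * ρ = ρi ^ m := by
  rw [pow_succ, mul_assoc, rir, mul_one]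

lemma rm_ri (m : ℕ) : ρ ^ (m + 1) * ρi = ρ ^ m := by
  rw [pow_succ, mul_assoc, rri, mul_one]

lemma ak_ri (k : ℕ) : α ^ (k + 1) * ρi = α ^ (k + 1) * ρ := by
  calc α ^ (k + 1) * ρi = α ^ k * (e₂ * (e₁ * ρi)) := by
        rw [pow_succ]; simp only [mul_assoc]
    _ = α ^ k * (e₂ * (e₁ * ρ)) := by rw [e1ri]
    _ = α ^ (k + 1) * ρ := by rw [pow_succ]; simp only [mul_assoc]

lemma bk_ri (k : ℕ) : β ^ (k + 1) * ρi = β ^ (k + 1) * ρ := by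
  calc β ^ (k + 1) * ρi = β ^ k * (e₁ * (e₂ * ρi)) := by
        rw [pow_succ]; simp only [mul_assoc]
    _ = β ^ k * (e₁ * (e₂ * ρ)) := by rw [e2ri]
    _ = β ^ (k + 1) * ρ := by rw [pow_succ]; simp only [mul_assoc]

end Aux

lemma span_mul_closed {A : Type*} [Semiring A] [Algebra ℂ A] {S : Set A} {g : A}
    (h : ∀ s ∈ S, s * g ∈ Submodule.span ℂ S) :
    ∀ w ∈ Submodule.span ℂ S, w * g ∈ Submodule.span ℂ S := by
  intro w hw
  induction hw using Submodule.span_induction with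
  | mem s hs => exact h s hs
  | zero => simpa using (Submodule.span ℂ S).zero_mem
  | add x y _ _ hx hy => rw [add_mul]; exact add_mem hx hy
  | smul c x _ hx => rw [smul_mul_assoc]; exact Submodule.smul_mem _ _ hx


/-- `TL₂` is spanned (as a ℂ-vector space) by
`{ρ^m : m ∈ ℤ} ∪ {(e₂e₁)^k, ρ(e₂e₁)^k, e₁(e₂e₁)^k, ρe₁(e₂e₁)^k : k ≥ 0}
∪ {(e₁e₂)^k, ρ(e₁e₂)^k, e₂(e₁e₂)^k, ρe₂(e₁e₂)^k : k ≥ 0}`.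
Here `ρ^m` for `m ∈ ℤ` is encoded as `ρ^m` (`m ≥ 0`) together with `(ρ⁻¹)^m` (`m ≥ 0`),
and `e₂ = E t4 2 2` (index mod 2). -/
theorem statement4 (t4 : ℂ) (ht4 : t4 ≠ 0) :
    Submodule.span ℂ
      {x : TL t4 2 |
        (∃ m : ℕ, x = R t4 2 ^ m ∨ x = Ri t4 2 ^ m) ∨
        (∃ k : ℕ, x = (E t4 2 2 * E t4 2 1) ^ k ∨
          x = R t4 2 * (E t4 2 2 * E t4 2 1) ^ k ∨
          x = E t4 2 1 * (E t4 2 2 * E t4 2 1) ^ k ∨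
          x = R t4 2 * E t4 2 1 * (E t4 2 2 * E t4 2 1) ^ k) ∨
        (∃ k : ℕ, x = (E t4 2 1 * E t4 2 2) ^ k ∨
          x = R t4 2 * (E t4 2 1 * E t4 2 2) ^ k ∨
          x = E t4 2 2 * (E t4 2 1 * E t4 2 2) ^ k ∨
          x = R t4 2 * E t4 2 2 * (E t4 2 1 * E t4 2 2) ^ k)} = ⊤ := by
  rw [Submodule.eq_top_iff']
  intro z
  set S : Set (TL t4 2) := {x : TL t4 2 |
        (∃ m : ℕ, x = R t4 2 ^ m ∨ x = Ri t4 2 ^ m) ∨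
        (∃ k : ℕ, x = (E t4 2 2 * E t4 2 1) ^ k ∨
          x = R t4 2 * (E t4 2 2 * E t4 2 1) ^ k ∨
          x = E t4 2 1 * (E t4 2 2 * E t4 2 1) ^ k ∨
          x = R t4 2 * E t4 2 1 * (E t4 2 2 * E t4 2 1) ^ k) ∨
        (∃ k : ℕ, x = (E t4 2 1 * E t4 2 2) ^ k ∨
          x = R t4 2 * (E t4 2 1 * E t4 2 2) ^ k ∨
          x = E t4 2 2 * (E t4 2 1 * E t4 2 2) ^ k ∨
          x = R t4 2 * E t4 2 2 * (E t4 2 1 * E t4 2 2) ^ k)} with hS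
  -- basic memberships
  have m1 : ∀ m : ℕ, R t4 2 ^ m ∈ Submodule.span ℂ S := fun m =>
    Submodule.subset_span (by rw [hS]; exact Or.inl ⟨m, Or.inl rfl⟩)
  have m2 : ∀ m : ℕ, Ri t4 2 ^ m ∈ Submodule.span ℂ S := fun m =>
    Submodule.subset_span (by rw [hS]; exact Or.inl ⟨m, Or.inr rfl⟩)
  have m3 : ∀ k : ℕ, (E t4 2 2 * E t4 2 1) ^ k ∈ Submodule.span ℂ S := fun k =>
    Submodule.subset_span (by rw [hS]; exact Or.inr (Or.inl ⟨k, Or.inl rfl⟩))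
  have m4 : ∀ k : ℕ, R t4 2 * (E t4 2 2 * E t4 2 1) ^ k ∈ Submodule.span ℂ S := fun k =>
    Submodule.subset_span (by rw [hS]; exact Or.inr (Or.inl ⟨k, Or.inr (Or.inl rfl)⟩))
  have m5 : ∀ k : ℕ, E t4 2 1 * (E t4 2 2 * E t4 2 1) ^ k ∈ Submodule.span ℂ S := fun k =>
    Submodule.subset_span (by rw [hS]; exact Or.inr (Or.inl ⟨k, Or.inr (Or.inr (Or.inl rfl))⟩))
  have m6 : ∀ k : ℕ, R t4 2 * E t4 2 1 * (E t4 2 2 * E t4 2 1) ^ k ∈ Submodule.span ℂ S := fun k =>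
    Submodule.subset_span (by rw [hS]; exact Or.inr (Or.inl ⟨k, Or.inr (Or.inr (Or.inr rfl))⟩))
  have m7 : ∀ k : ℕ, (E t4 2 1 * E t4 2 2) ^ k ∈ Submodule.span ℂ S := fun k =>
    Submodule.subset_span (by rw [hS]; exact Or.inr (Or.inr ⟨k, Or.inl rfl⟩))
  have m8 : ∀ k : ℕ, R t4 2 * (E t4 2 1 * E t4 2 2) ^ k ∈ Submodule.span ℂ S := fun k =>
    Submodule.subset_span (by rw [hS]; exact Or.inr (Or.inr ⟨k, Or.inr (Or.inl rfl)⟩))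
  have m9 : ∀ k : ℕ, E t4 2 2 * (E t4 2 1 * E t4 2 2) ^ k ∈ Submodule.span ℂ S := fun k =>
    Submodule.subset_span (by rw [hS]; exact Or.inr (Or.inr ⟨k, Or.inr (Or.inr (Or.inl rfl))⟩))
  have m10 : ∀ k : ℕ, R t4 2 * E t4 2 2 * (E t4 2 1 * E t4 2 2) ^ k ∈ Submodule.span ℂ S := fun k =>
    Submodule.subset_span (by rw [hS]; exact Or.inr (Or.inr ⟨k, Or.inr (Or.inr (Or.inr rfl))⟩))
  have me1 : E t4 2 1 ∈ Submodule.span ℂ S := by simpa using m5 0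
  have mre1 : R t4 2 * E t4 2 1 ∈ Submodule.span ℂ S := by simpa using m6 0
  have me2 : E t4 2 2 ∈ Submodule.span ℂ S := by simpa using m9 0
  have mre2 : R t4 2 * E t4 2 2 ∈ Submodule.span ℂ S := by simpa using m10 0
  have mone : (1 : TL t4 2) ∈ Submodule.span ℂ S := by simpa using m1 0
  have mr : R t4 2 ∈ Submodule.span ℂ S := by simpa using m1 1
  have mri : Ri t4 2 ∈ Submodule.span ℂ S := by simpa using m2 1
  -- closure under right multiplication by E 1
  have closE1 : ∀ s ∈ S, s * E t4 2 1 ∈ Submodule.span ℂ S := by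
    rintro s hs
    rw [hS] at hs
    rcases hs with ⟨m, rfl | rfl⟩ | ⟨k, rfl | rfl | rfl | rfl⟩ | ⟨k, rfl | rfl | rfl | rfl⟩
    · rcases rm_e1 t4 m with h | h <;> rw [h]
      exacts [me1, mre1]
    · rcases rim_e1 t4 m with h | h <;> rw [h]
      exacts [me1, mre1]
    · cases k with
      | zero => simpa using me1
      | succ n =>
        rw [ak_e1 t4]
        exact Submodule.smul_mem _ _ (m3 (n + 1))
    · cases k with
      | zero => rw [pow_zero, mul_one]; exact mre1
      | succ n =>
        rw [mul_assoc, ak_e1 t4, mul_smul_comm]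
        exact Submodule.smul_mem _ _ (m4 (n + 1))
    · cases k with
      | zero => rw [pow_zero, mul_one, Esq_s4 t4]; exact Submodule.smul_mem _ _ me1
      | succ n =>
        rw [mul_assoc, ak_e1 t4, mul_smul_comm]
        exact Submodule.smul_mem _ _ (m5 (n + 1))
    · cases k with
      | zero =>
        rw [pow_zero, mul_one, mul_assoc, Esq_s4 t4, mul_smul_comm]
        exact Submodule.smul_mem _ _ mre1
      | succ n =>
        rw [mul_assoc, ak_e1 t4, mul_smul_comm]
        exact Submodule.smul_mem _ _ (m6 (n + 1))
    · rw [bk_e1 t4]; exact m5 k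
    · rw [mul_assoc, bk_e1 t4, ← mul_assoc]; exact m6 k
    · rw [e2bk_e1 t4]; exact m3 (k + 1)
    · rw [mul_assoc (R t4 2), mul_assoc (R t4 2), e2bk_e1 t4]
      exact m4 (k + 1)
  -- closure under right multiplication by E 2
  have closE2 : ∀ s ∈ S, s * E t4 2 2 ∈ Submodule.span ℂ S := by
    rintro s hs
    rw [hS] at hs
    rcases hs with ⟨m, rfl | rfl⟩ | ⟨k, rfl | rfl | rfl | rfl⟩ | ⟨k, rfl | rfl | rfl | rfl⟩
    · rcases rm_e2 t4 m with h | h <;> rw [h]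
      exacts [me2, mre2]
    · rcases rim_e2 t4 m with h | h <;> rw [h]
      exacts [me2, mre2]
    · rw [ak_e2 t4]; exact m9 k
    · rw [mul_assoc, ak_e2 t4, ← mul_assoc]; exact m10 k
    · rw [e1ak_e2 t4]; exact m7 (k + 1)
    · rw [mul_assoc (R t4 2), mul_assoc (R t4 2), e1ak_e2 t4]
      exact m8 (k + 1)
    · cases k with
      | zero => simpa using me2
      | succ n =>
        rw [bk_e2 t4]
        exact Submodule.smul_mem _ _ (m7 (n + 1))
    · cases k with
      | zero => rw [pow_zero, mul_one]; exact mre2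
      | succ n =>
        rw [mul_assoc, bk_e2 t4, mul_smul_comm]
        exact Submodule.smul_mem _ _ (m8 (n + 1))
    · cases k with
      | zero => rw [pow_zero, mul_one, Esq_s4 t4]; exact Submodule.smul_mem _ _ me2
      | succ n =>
        rw [mul_assoc, bk_e2 t4, mul_smul_comm]
        exact Submodule.smul_mem _ _ (m9 (n + 1))
    · cases k with
      | zero =>
        rw [pow_zero, mul_one, mul_assoc, Esq_s4 t4, mul_smul_comm]
        exact Submodule.smul_mem _ _ mre2
      | succ n =>
        rw [mul_assoc, bk_e2 t4, mul_smul_comm]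
        exact Submodule.smul_mem _ _ (m10 (n + 1))
  -- closure under right multiplication by R
  have closR : ∀ s ∈ S, s * R t4 2 ∈ Submodule.span ℂ S := by
    rintro s hs
    rw [hS] at hs
    rcases hs with ⟨m, rfl | rfl⟩ | ⟨k, rfl | rfl | rfl | rfl⟩ | ⟨k, rfl | rfl | rfl | rfl⟩
    · rw [← pow_succ]; exact m1 (m + 1)
    · cases m with
      | zero => rw [pow_zero, one_mul]; exact mr
      | succ n => rw [rim_r t4]; exact m2 n
    · rw [ak_r t4]; exact m8 k
    · cases k with
      | zero => rw [pow_zero, mul_one, ← pow_two]; exact m1 2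
      | succ n =>
        rw [mul_assoc, ak_r t4, ← mul_assoc, rr_bk t4]
        exact m7 (n + 1)
    · rw [mul_assoc, ak_r t4, ← mul_assoc, e1r t4]; exact m10 k
    · have h : R t4 2 * E t4 2 1 * (E t4 2 2 * E t4 2 1) ^ k * R t4 2
          = E t4 2 2 * (E t4 2 1 * E t4 2 2) ^ k := by
        calc R t4 2 * E t4 2 1 * (E t4 2 2 * E t4 2 1) ^ k * R t4 2
            = R t4 2 * (E t4 2 1 * ((E t4 2 2 * E t4 2 1) ^ k * R t4 2)) := by
              simp only [mul_assoc]
          _ = R t4 2 * (E t4 2 1 * (R t4 2 * (E t4 2 1 * E t4 2 2) ^ k)) := by rw [ak_r t4]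
          _ = R t4 2 * (E t4 2 1 * R t4 2) * (E t4 2 1 * E t4 2 2) ^ k := by
              simp only [mul_assoc]
          _ = R t4 2 * (R t4 2 * E t4 2 2) * (E t4 2 1 * E t4 2 2) ^ k := by rw [e1r t4]
          _ = (R t4 2 * R t4 2 * E t4 2 2) * (E t4 2 1 * E t4 2 2) ^ k := by
              simp only [mul_assoc]
          _ = E t4 2 2 * (E t4 2 1 * E t4 2 2) ^ k := by rw [rre2 t4]
      rw [h]; exact m9 k
    · rw [bk_r t4]; exact m4 k
    · cases k with
      | zero => rw [pow_zero, mul_one, ← pow_two]; exact m1 2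
      | succ n =>
        rw [mul_assoc, bk_r t4, ← mul_assoc, rr_ak t4]
        exact m3 (n + 1)
    · rw [mul_assoc, bk_r t4, ← mul_assoc, e2r t4]; exact m6 k
    · have h : R t4 2 * E t4 2 2 * (E t4 2 1 * E t4 2 2) ^ k * R t4 2
          = E t4 2 1 * (E t4 2 2 * E t4 2 1) ^ k := by
        calc R t4 2 * E t4 2 2 * (E t4 2 1 * E t4 2 2) ^ k * R t4 2
            = R t4 2 * (E t4 2 2 * ((E t4 2 1 * E t4 2 2) ^ k * R t4 2)) := by
              simp only [mul_assoc]
          _ = R t4 2 * (E t4 2 2 * (R t4 2 * (E t4 2 2 * E t4 2 1) ^ k)) := by rw [bk_r t4]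
          _ = R t4 2 * (E t4 2 2 * R t4 2) * (E t4 2 2 * E t4 2 1) ^ k := by
              simp only [mul_assoc]
          _ = R t4 2 * (R t4 2 * E t4 2 1) * (E t4 2 2 * E t4 2 1) ^ k := by rw [e2r t4]
          _ = (R t4 2 * R t4 2 * E t4 2 1) * (E t4 2 2 * E t4 2 1) ^ k := by
              simp only [mul_assoc]
          _ = E t4 2 1 * (E t4 2 2 * E t4 2 1) ^ k := by rw [rre1 t4]
      rw [h]; exact m5 k
  -- closure under right multiplication by Ri
  have closRi : ∀ s ∈ S, s * Ri t4 2 ∈ Submodule.span ℂ S := by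
    rintro s hs
    rw [hS] at hs
    rcases hs with ⟨m, rfl | rfl⟩ | ⟨k, rfl | rfl | rfl | rfl⟩ | ⟨k, rfl | rfl | rfl | rfl⟩
    · cases m with
      | zero => rw [pow_zero, one_mul]; exact mri
      | succ n => rw [rm_ri t4]; exact m1 n
    · rw [← pow_succ]; exact m2 (m + 1)
    · cases k with
      | zero => rw [pow_zero, one_mul]; exact mri
      | succ n => rw [ak_ri t4, ak_r t4]; exact m8 (n + 1)
    · cases k with
      | zero => rw [pow_zero, mul_one, rri t4]; exact mone
      | succ n =>
        rw [mul_assoc, ak_ri t4, ak_r t4, ← mul_assoc, rr_bk t4]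
        exact m7 (n + 1)
    · cases k with
      | zero => rw [pow_zero, mul_one, e1ri t4, e1r t4]; exact mre2
      | succ n =>
        rw [mul_assoc, ak_ri t4, ak_r t4, ← mul_assoc, e1r t4]
        exact m10 (n + 1)
    · cases k with
      | zero =>
        rw [pow_zero, mul_one, mul_assoc, e1ri t4, e1r t4, ← mul_assoc, rre2 t4]
        exact me2
      | succ n =>
        have h : R t4 2 * E t4 2 1 * (E t4 2 2 * E t4 2 1) ^ (n + 1) * Ri t4 2
            = E t4 2 2 * (E t4 2 1 * E t4 2 2) ^ (n + 1) := by
          calc R t4 2 * E t4 2 1 * (E t4 2 2 * E t4 2 1) ^ (n + 1) * Ri t4 2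
              = R t4 2 * (E t4 2 1 * ((E t4 2 2 * E t4 2 1) ^ (n + 1) * Ri t4 2)) := by
                simp only [mul_assoc]
            _ = R t4 2 * (E t4 2 1 * (R t4 2 * (E t4 2 1 * E t4 2 2) ^ (n + 1))) := by
                rw [ak_ri t4, ak_r t4]
            _ = R t4 2 * (E t4 2 1 * R t4 2) * (E t4 2 1 * E t4 2 2) ^ (n + 1) := by
                simp only [mul_assoc]
            _ = R t4 2 * (R t4 2 * E t4 2 2) * (E t4 2 1 * E t4 2 2) ^ (n + 1) := by
                rw [e1r t4]
            _ = (R t4 2 * R t4 2 * E t4 2 2) * (E t4 2 1 * E t4 2 2) ^ (n + 1) := by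
                simp only [mul_assoc]
            _ = E t4 2 2 * (E t4 2 1 * E t4 2 2) ^ (n + 1) := by rw [rre2 t4]
        rw [h]; exact m9 (n + 1)
    · cases k with
      | zero => rw [pow_zero, one_mul]; exact mri
      | succ n => rw [bk_ri t4, bk_r t4]; exact m4 (n + 1)
    · cases k with
      | zero => rw [pow_zero, mul_one, rri t4]; exact mone
      | succ n =>
        rw [mul_assoc, bk_ri t4, bk_r t4, ← mul_assoc, rr_ak t4]
        exact m3 (n + 1)
    · cases k with
      | zero => rw [pow_zero, mul_one, e2ri t4, e2r t4]; exact mre1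
      | succ n =>
        rw [mul_assoc, bk_ri t4, bk_r t4, ← mul_assoc, e2r t4]
        exact m6 (n + 1)
    · cases k with
      | zero =>
        rw [pow_zero, mul_one, mul_assoc, e2ri t4, e2r t4, ← mul_assoc, rre1 t4]
        exact me1
      | succ n =>
        have h : R t4 2 * E t4 2 2 * (E t4 2 1 * E t4 2 2) ^ (n + 1) * Ri t4 2
            = E t4 2 1 * (E t4 2 2 * E t4 2 1) ^ (n + 1) := by
          calc R t4 2 * E t4 2 2 * (E t4 2 1 * E t4 2 2) ^ (n + 1) * Ri t4 2
              = R t4 2 * (E t4 2 2 * ((E t4 2 1 * E t4 2 2) ^ (n + 1) * Ri t4 2)) := by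
                simp only [mul_assoc]
            _ = R t4 2 * (E t4 2 2 * (R t4 2 * (E t4 2 2 * E t4 2 1) ^ (n + 1))) := by
                rw [bk_ri t4, bk_r t4]
            _ = R t4 2 * (E t4 2 2 * R t4 2) * (E t4 2 2 * E t4 2 1) ^ (n + 1) := by
                simp only [mul_assoc]
            _ = R t4 2 * (R t4 2 * E t4 2 1) * (E t4 2 2 * E t4 2 1) ^ (n + 1) := by
                rw [e2r t4]
            _ = (R t4 2 * R t4 2 * E t4 2 1) * (E t4 2 2 * E t4 2 1) ^ (n + 1) := by
                simp only [mul_assoc]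
            _ = E t4 2 1 * (E t4 2 2 * E t4 2 1) ^ (n + 1) := by rw [rre1 t4]
        rw [h]; exact m5 (n + 1)
  obtain ⟨y, rfl⟩ := RingQuot.mkAlgHom_surjective ℂ (TLrel t4 2) z
  have main : ∀ w ∈ Submodule.span ℂ S,
      w * RingQuot.mkAlgHom ℂ (TLrel t4 2) y ∈ Submodule.span ℂ S := by
    induction y using FreeAlgebra.induction with
    | grade0 c =>
      intro w hw
      rw [AlgHom.commutes]
      have h : w * (algebraMap ℂ (TL t4 2)) c = c • w := by
        rw [Algebra.algebraMap_eq_smul_one, mul_smul_comm, mul_one]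
      rw [h]
      exact Submodule.smul_mem _ _ hw
    | grade1 g =>
      cases g with
      | e i =>
        intro w hw
        fin_cases i
        · exact span_mul_closed closE2 w hw
        · exact span_mul_closed closE1 w hw
      | r => exact fun w hw => span_mul_closed closR w hw
      | ri => exact fun w hw => span_mul_closed closRi w hw
    | mul x y hx hy =>
      intro w hw
      rw [map_mul, ← mul_assoc]
      exact hy _ (hx w hw)
    | add x y hx hy =>
      intro w hw
      rw [map_add, mul_add]
      exact Submodule.add_mem _ (hx w hw) (hy w hw)
  simpa using main 1 mone


end SkeinTL
end
end

section
/- For n ≥ 3, there is a ℂ-algebra isomorphism from TL_n onto the unital ℂ-algebra presented by generators e_1,…,e_{n-1}, ρ, ρ^{-1} with relations: e_i^2 = -(t^{1/2}+t^{-1/2})e_i for 1 ≤ i < n; e_ie_j = e_je_i for 1 ≤ i,j < n with i-j ≠ ±1; e_ie_{i±1}e_i = e_i for 1 ≤ i, i±1 < n; ρe_i = e_{i+1}ρ for 1 ≤ i < n-1; ρ^2e_{n-1} = e_1ρ^2; ρρ^{-1} = 1 = ρ^{-1}ρ; ρ^2e_{n-1} = e_1e_2⋯e_{n-1}; this isomorphism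 sends e_i to e_i for 1 ≤ i ≤ n-1, ρ to ρ, and ρ^{-1} to ρ^{-1}. -/
noncomputable section

namespace SkeinTL

/-! The presentation of the extended affine Temperley-Lieb algebra on the restricted
set of generators `e_1, …, e_{n-1}, ρ, ρ^{-1}` (Remark on restricted generators). -/

/-- Generators: `e i` for `1 ≤ i ≤ n-1`, `ρ` and `ρ⁻¹`. -/
inductive TLPgen (n : ℕ) : Type
  | e : {i : ℕ // 1 ≤ i ∧ i < n} → TLPgen n
  | r : TLPgen n
  | ri : TLPgen n

abbrev FP (n : ℕ) : Type := FreeAlgebra ℂ (TLPgen n)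

def epf (n : ℕ) (i : {i : ℕ // 1 ≤ i ∧ i < n}) : FP n := FreeAlgebra.ι ℂ (TLPgen.e i)
def rpf (n : ℕ) : FP n := FreeAlgebra.ι ℂ TLPgen.r
def ripf (n : ℕ) : FP n := FreeAlgebra.ι ℂ TLPgen.ri

/-- The product `e₁e₂⋯e_{n-1}` in the free algebra on the restricted generators. -/
def chainProd (n : ℕ) : FP n :=
  (List.ofFn (fun k : Fin (n - 1) =>
    epf n ⟨(k : ℕ) + 1, Nat.le_add_left 1 k, by have := k.isLt; omega⟩)).prod

/-- The defining relations of the restricted-generator presentation: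
`eᵢ² = -(t^{1/2}+t^{-1/2})eᵢ` (`1 ≤ i < n`); `eᵢeⱼ = eⱼeᵢ` (`i - j ≠ ±1`);
`eᵢe_{i±1}eᵢ = eᵢ`; `ρeᵢ = e_{i+1}ρ` (`1 ≤ i < n-1`); `ρ²e_{n-1} = e₁ρ²`;
`ρρ⁻¹ = 1 = ρ⁻¹ρ`; `ρ²e_{n-1} = e₁e₂⋯e_{n-1}`. -/
inductive TLPrel (t4 : ℂ) (n : ℕ) : FP n → FP n → Prop
  | esq (i : {i : ℕ // 1 ≤ i ∧ i < n}) : TLPrel t4 n (epf n i * epf n i) ((-(t4 ^ 2 + t4⁻¹ ^ 2)) • epf n i)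
  | comm (i j : {i : ℕ // 1 ≤ i ∧ i < n}) (h1 : (i : ℕ) ≠ (j : ℕ) + 1) (h2 : (j : ℕ) ≠ (i : ℕ) + 1) :
      TLPrel t4 n (epf n i * epf n j) (epf n j * epf n i)
  | ebe (i j : {i : ℕ // 1 ≤ i ∧ i < n}) (h : (j : ℕ) = (i : ℕ) + 1 ∨ (i : ℕ) = (j : ℕ) + 1) :
      TLPrel t4 n (epf n i * epf n j * epf n i) (epf n i)
  | rer (i j : {i : ℕ // 1 ≤ i ∧ i < n}) (h : (j : ℕ) = (i : ℕ) + 1) :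
      TLPrel t4 n (rpf n * epf n i) (epf n j * rpf n)
  | rre (i j : {i : ℕ // 1 ≤ i ∧ i < n}) (hi : (i : ℕ) = n - 1) (hj : (j : ℕ) = 1) :
      TLPrel t4 n (rpf n * rpf n * epf n i) (epf n j * (rpf n * rpf n))
  | rri : TLPrel t4 n (rpf n * ripf n) 1
  | rir : TLPrel t4 n (ripf n * rpf n) 1
  | chain (i : {i : ℕ // 1 ≤ i ∧ i < n}) (hi : (i : ℕ) = n - 1) :
      TLPrel t4 n (rpf n * rpf n * epf n i) (chainProd n)

/-- The algebra with the restricted-generator presentation. -/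
abbrev TLP (t4 : ℂ) (n : ℕ) : Type := RingQuot (TLPrel t4 n)

def EP (t4 : ℂ) (n : ℕ) (i : {i : ℕ // 1 ≤ i ∧ i < n}) : TLP t4 n :=
  RingQuot.mkAlgHom ℂ (TLPrel t4 n) (epf n i)
def RP (t4 : ℂ) (n : ℕ) : TLP t4 n := RingQuot.mkAlgHom ℂ (TLPrel t4 n) (rpf n)
def RiP (t4 : ℂ) (n : ℕ) : TLP t4 n := RingQuot.mkAlgHom ℂ (TLPrel t4 n) (ripf n)

section Generic
variable {A : Type*} [Monoid A] {n : ℕ}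

def Jc (n : ℕ) (a : ZMod n) : ℕ → List (ZMod n)
  | 0 => []
  | k+1 => (a - (k : ZMod n)) :: Jc n a k

lemma Jc_map_add (a c : ZMod n) : ∀ k, (Jc n a k).map (· + c) = Jc n (a + c) k
  | 0 => rfl
  | k+1 => by
    simp only [Jc, List.map_cons, Jc_map_add a c k]
    congr 1
    ring

lemma Jc_split (a : ZMod n) : ∀ k, Jc n a (k+1) = Jc n (a-1) k ++ [a]
  | 0 => by simp [Jc]
  | k+1 => by
    have h1 : Jc n a (k+2) = (a - (k+1 : ℕ)) :: Jc n a (k+1) := rfl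
    rw [h1, Jc_split a k]
    have h2 : Jc n (a-1) (k+1) = ((a-1) - (k : ℕ)) :: Jc n (a-1) k := rfl
    rw [h2]
    simp only [List.cons_append]
    have h3 : a - ((k+1 : ℕ) : ZMod n) = (a - 1) - (k : ℕ) := by push_cast; ring
    rw [h3]

variable (r ri : A) (e : ZMod n → A)

lemma shift_one (hrer : ∀ i, r * e i = e (i+1) * r) (l : List (ZMod n)) :
    r * (l.map e).prod = ((l.map (· + 1)).map e).prod * r := by
  induction l with
  | nil => simp
  | cons i l ih =>
    simp only [List.map_cons, List.prod_cons, ← mul_assoc, hrer i]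
    rw [mul_assoc (e (i+1)) r, ih, ← mul_assoc]

lemma shift_pow (hrer : ∀ i, r * e i = e (i+1) * r) (k : ℕ) (l : List (ZMod n)) :
    r ^ k * (l.map e).prod = ((l.map (· + (k : ZMod n))).map e).prod * r ^ k := by
  induction k with
  | zero => simp
  | succ k ih =>
    rw [pow_succ', mul_assoc, ih, ← mul_assoc, shift_one r e hrer (l.map (· + (k : ZMod n))),
      mul_assoc, ← pow_succ']
    congr 2
    simp only [List.map_map]
    apply List.map_congr_left
    intro x _
    simp only [Function.comp_apply]
    push_cast
    ring

lemma shift_pow_single (hrer : ∀ i, r * e i = e (i+1) * r) (k : ℕ) (i : ZMod n) :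
    r ^ k * e i = e (i + (k : ZMod n)) * r ^ k := by
  have := shift_pow r e hrer k [i]
  simpa using this

lemma ri_pow_r_pow (hrir : ri * r = 1) (k : ℕ) : ri ^ k * r ^ k = 1 := by
  induction k with
  | zero => simp
  | succ k ih =>
    rw [pow_succ, pow_succ']
    calc ri ^ k * ri * (r * r ^ k) = ri ^ k * (ri * r) * r ^ k := by
          simp [mul_assoc]
      _ = 1 := by rw [hrir, mul_one, ih]

lemma cancel_pow_left (hrir : ri * r = 1) (k : ℕ) {x y : A} (h : r ^ k * x = r ^ k * y) :
    x = y := by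
  have h2 := congrArg (ri ^ k * ·) h
  simpa [← mul_assoc, ri_pow_r_pow r ri hrir k] using h2

lemma cancel_pow_right (hrri : r * ri = 1) (k : ℕ) {x y : A} (h : x * r ^ k = y * r ^ k) :
    x = y := by
  have hk : r ^ k * ri ^ k = 1 := ri_pow_r_pow ri r hrri k
  have h2 := congrArg (· * ri ^ k) h
  simpa [mul_assoc, hk] using h2

lemma rpow_formula (hrer : ∀ i, r * e i = e (i+1) * r) (k : ℕ) :
    (r * e 1) ^ k = r ^ k * ((Jc n 1 k).map e).prod := by
  induction k with
  | zero => simp [Jc]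
  | succ k ih =>
    rw [pow_succ', ih]
    have h1 : e 1 * r ^ k = r ^ k * e (1 - (k : ZMod n)) := by
      have := shift_pow_single r e hrer k (1 - (k : ZMod n))
      rw [sub_add_cancel] at this
      exact this.symm
    have h2 : Jc n 1 (k+1) = (1 - (k : ZMod n)) :: Jc n 1 k := rfl
    rw [h2, List.map_cons, List.prod_cons]
    calc r * e 1 * (r ^ k * ((Jc n 1 k).map e).prod)
        = r * (e 1 * r ^ k) * ((Jc n 1 k).map e).prod := by simp [mul_assoc]
      _ = r * (r ^ k * e (1 - (k : ZMod n))) * ((Jc n 1 k).map e).prod := by rw [h1]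
      _ = r ^ (k+1) * (e (1 - (k : ZMod n)) * ((Jc n 1 k).map e).prod) := by
          rw [pow_succ']; simp [mul_assoc]

lemma ofFn_eq_Jc : ∀ m : ℕ, (List.ofFn fun k : Fin m => (((k : ℕ) + 1 : ℕ) : ZMod n)) = Jc n ((m : ℕ) : ZMod n) m
  | 0 => rfl
  | m+1 => by
    rw [List.ofFn_succ', Jc_split, List.concat_eq_append]
    congr 1
    · simp only [Fin.coe_castSucc]
      rw [ofFn_eq_Jc m]
      congr 1
      push_cast
      ring

lemma dir1 (hn : 3 ≤ n)
    (hrri : r * ri = 1) (hrir : ri * r = 1)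
    (hrer : ∀ i, r * e i = e (i+1) * r)
    (hch : r * r * e (-1) = ((Jc n (-1) (n-1)).map e).prod) :
    (r * e 1) ^ (n-1) = r ^ n * (r * e 1) := by
  have hc2 : ((2 : ℕ) : ZMod n) = 2 := by push_cast; ring
  have hs := shift_pow r e hrer 2 (Jc n (-1) (n-1))
  rw [Jc_map_add] at hs
  have hadd : (-1 : ZMod n) + ((2 : ℕ) : ZMod n) = 1 := by rw [hc2]; ring
  rw [hadd, ← hch] at hs
  have hsingle := shift_pow_single r e hrer 2 (-1 : ZMod n)
  rw [hadd] at hsingle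
  have hrr : r * r = r ^ 2 := (sq r).symm
  have hlhs : r ^ 2 * (r * r * e (-1)) = (r ^ 2 * e 1) * r ^ 2 := by
    rw [hrr, mul_assoc, ← hsingle, ← mul_assoc]
  rw [hlhs] at hs
  have hP1 : ((Jc n 1 (n-1)).map e).prod = r ^ 2 * e 1 :=
    (cancel_pow_right r ri hrri 2 hs).symm
  rw [rpow_formula r e hrer (n-1), hP1]
  have hpow : r ^ (n-1) * r ^ 2 = r ^ n * r := by
    rw [← pow_add, ← pow_succ]
    congr 1
    omega
  rw [← mul_assoc, hpow, mul_assoc]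

lemma dir2 (hn : 3 ≤ n)
    (hrri : r * ri = 1) (hrir : ri * r = 1)
    (hrer : ∀ i, r * e i = e (i+1) * r)
    (hcyc : (r * e 1) ^ (n-1) = r ^ n * (r * e 1)) :
    r * r * e (-1) = ((Jc n (-1) (n-1)).map e).prod := by
  have hP1 : ((Jc n 1 (n-1)).map e).prod = r ^ 2 * e 1 := by
    apply cancel_pow_left r ri hrir (n-1)
    rw [← rpow_formula r e hrer (n-1), hcyc]
    rw [← mul_assoc, ← pow_succ, ← mul_assoc, ← pow_add]
    congr 2
    omega
  have hn2 : ((n - 2 : ℕ) : ZMod n) = -2 := by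
    rw [Nat.cast_sub (by omega)]
    simp
  have hs := shift_pow r e hrer (n-2) (Jc n 1 (n-1))
  rw [Jc_map_add, hn2, hP1] at hs
  have hadd : (1 : ZMod n) + -2 = -1 := by ring
  rw [hadd] at hs
  have hsingle := shift_pow_single r e hrer (n-2) (1 : ZMod n)
  rw [hn2, hadd] at hsingle
  have hlhs : r ^ (n-2) * (r ^ 2 * e 1) = (r * r * e (-1)) * r ^ (n-2) := by
    have h1 : r ^ (n-2) * (r ^ 2 * e 1) = r ^ 2 * (r ^ (n-2) * e 1) := by
      rw [← mul_assoc, ← mul_assoc, ← pow_add, ← pow_add]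
      congr 2
      omega
    rw [h1, hsingle, ← mul_assoc, ← sq]
  rw [hlhs] at hs
  exact cancel_pow_right r ri hrri (n-2) hs

lemma conj_up (hrri : r * ri = 1) (hrer : ∀ i, r * e i = e (i+1) * r) (i : ZMod n) :
    e (i + 1) = r * e i * ri := by
  rw [hrer, mul_assoc, hrri, mul_one]

lemma conj_down (hrir : ri * r = 1) (hrer : ∀ i, r * e i = e (i+1) * r) (i : ZMod n) :
    e (i - 1) = ri * e i * r := by
  have h := hrer (i - 1)
  rw [sub_add_cancel] at h
  rw [mul_assoc, ← h, ← mul_assoc, hrir, one_mul]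

lemma conj_mul2 (hrir : ri * r = 1) (x y : A) :
    (r * x * ri) * (r * y * ri) = r * (x * y) * ri := by
  have hc : ∀ w, ri * (r * w) = w := fun w => by rw [← mul_assoc, hrir, one_mul]
  simp only [mul_assoc, hc]

lemma conj_mul3 (hrir : ri * r = 1) (x y z : A) :
    (r * x * ri) * (r * y * ri) * (r * z * ri) = r * (x * y * z) * ri := by
  have hc : ∀ w, ri * (r * w) = w := fun w => by rw [← mul_assoc, hrir, one_mul]
  simp only [mul_assoc, hc]

lemma conj_triple (hrri : r * ri = 1) (hrir : ri * r = 1)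
    (hrer : ∀ i, r * e i = e (i+1) * r) (i j : ZMod n) :
    e (i + 1) * e (j + 1) * e (i + 1) = r * (e i * e j * e i) * ri := by
  rw [conj_up r ri e hrri hrer i, conj_up r ri e hrri hrer j, conj_mul3 r ri hrir]

lemma conj_triple' (hrri : r * ri = 1) (hrir : ri * r = 1)
    (hrer : ∀ i, r * e i = e (i+1) * r) (i j : ZMod n) :
    e (i - 1) * e (j - 1) * e (i - 1) = ri * (e i * e j * e i) * r := by
  rw [conj_down r ri e hrir hrer i, conj_down r ri e hrir hrer j, conj_mul3 ri r hrri]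

end Generic

section Rels

variable (t4 : ℂ) (n : ℕ)

lemma Prri : RP t4 n * RiP t4 n = 1 := by
  simpa [RP, RiP, map_mul, map_one] using
    RingQuot.mkAlgHom_rel ℂ (TLPrel.rri (t4 := t4) (n := n))

lemma Prir : RiP t4 n * RP t4 n = 1 := by
  simpa [RP, RiP, map_mul, map_one] using
    RingQuot.mkAlgHom_rel ℂ (TLPrel.rir (t4 := t4) (n := n))

lemma Pesq (i : {i : ℕ // 1 ≤ i ∧ i < n}) :
    EP t4 n i * EP t4 n i = (-(t4 ^ 2 + t4⁻¹ ^ 2)) • EP t4 n i := by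
  simpa [EP, map_mul, map_smul] using
    RingQuot.mkAlgHom_rel ℂ (TLPrel.esq (t4 := t4) (n := n) i)

lemma Pcomm (i j : {i : ℕ // 1 ≤ i ∧ i < n}) (h1 : (i : ℕ) ≠ (j : ℕ) + 1)
    (h2 : (j : ℕ) ≠ (i : ℕ) + 1) :
    EP t4 n i * EP t4 n j = EP t4 n j * EP t4 n i := by
  simpa [EP, map_mul] using
    RingQuot.mkAlgHom_rel ℂ (TLPrel.comm (t4 := t4) (n := n) i j h1 h2)

lemma Pebe (i j : {i : ℕ // 1 ≤ i ∧ i < n})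
    (h : (j : ℕ) = (i : ℕ) + 1 ∨ (i : ℕ) = (j : ℕ) + 1) :
    EP t4 n i * EP t4 n j * EP t4 n i = EP t4 n i := by
  simpa [EP, map_mul] using
    RingQuot.mkAlgHom_rel ℂ (TLPrel.ebe (t4 := t4) (n := n) i j h)

lemma Prer (i j : {i : ℕ // 1 ≤ i ∧ i < n}) (h : (j : ℕ) = (i : ℕ) + 1) :
    RP t4 n * EP t4 n i = EP t4 n j * RP t4 n := by
  simpa [EP, RP, map_mul] using
    RingQuot.mkAlgHom_rel ℂ (TLPrel.rer (t4 := t4) (n := n) i j h)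

lemma Prre (i j : {i : ℕ // 1 ≤ i ∧ i < n}) (hi : (i : ℕ) = n - 1) (hj : (j : ℕ) = 1) :
    RP t4 n * RP t4 n * EP t4 n i = EP t4 n j * (RP t4 n * RP t4 n) := by
  simpa [EP, RP, map_mul] using
    RingQuot.mkAlgHom_rel ℂ (TLPrel.rre (t4 := t4) (n := n) i j hi hj)

lemma Pchain (i : {i : ℕ // 1 ≤ i ∧ i < n}) (hi : (i : ℕ) = n - 1) :
    RP t4 n * RP t4 n * EP t4 n i = RingQuot.mkAlgHom ℂ (TLPrel t4 n) (chainProd n) := by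
  simpa [EP, RP, map_mul] using
    RingQuot.mkAlgHom_rel ℂ (TLPrel.chain (t4 := t4) (n := n) i hi)

-- TL side
lemma Trri : R t4 n * Ri t4 n = 1 := by
  simpa [R, Ri, map_mul, map_one] using
    RingQuot.mkAlgHom_rel ℂ (TLrel.rri (t4 := t4) (n := n))

lemma Trir : Ri t4 n * R t4 n = 1 := by
  simpa [R, Ri, map_mul, map_one] using
    RingQuot.mkAlgHom_rel ℂ (TLrel.rir (t4 := t4) (n := n))

lemma Tesq (i : ZMod n) :
    E t4 n i * E t4 n i = (-(t4 ^ 2 + t4⁻¹ ^ 2)) • E t4 n i := by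
  simpa [E, map_mul, map_smul] using
    RingQuot.mkAlgHom_rel ℂ (TLrel.esq (t4 := t4) (n := n) i)

lemma Trer (i : ZMod n) : R t4 n * E t4 n i = E t4 n (i + 1) * R t4 n := by
  simpa [E, R, map_mul] using
    RingQuot.mkAlgHom_rel ℂ (TLrel.rer (t4 := t4) (n := n) i)

lemma Tcomm (hn : 3 ≤ n) (i j : ZMod n) (h1 : i - j ≠ 1) (h2 : i - j ≠ -1) :
    E t4 n i * E t4 n j = E t4 n j * E t4 n i := by
  simpa [E, map_mul] using
    RingQuot.mkAlgHom_rel ℂ (TLrel.comm (t4 := t4) (n := n) hn i j h1 h2)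

lemma Teplus (hn : 3 ≤ n) (i : ZMod n) :
    E t4 n i * E t4 n (i + 1) * E t4 n i = E t4 n i := by
  simpa [E, map_mul] using
    RingQuot.mkAlgHom_rel ℂ (TLrel.eplus (t4 := t4) (n := n) hn i)

lemma Teminus (hn : 3 ≤ n) (i : ZMod n) :
    E t4 n i * E t4 n (i - 1) * E t4 n i = E t4 n i := by
  simpa [E, map_mul] using
    RingQuot.mkAlgHom_rel ℂ (TLrel.eminus (t4 := t4) (n := n) hn i)

lemma Tcyc (hn : 3 ≤ n) :
    (R t4 n * E t4 n 1) ^ (n - 1) = R t4 n ^ n * (R t4 n * E t4 n 1) := by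
  simpa [E, R, map_mul, map_pow] using
    RingQuot.mkAlgHom_rel ℂ (TLrel.cyc (t4 := t4) (n := n) hn)

end Rels

section EtSec

lemma zmod_surj (n : ℕ) (hn : 3 ≤ n) (i : ZMod n) :
    ∃ v : ℕ, v < n ∧ ((v : ℕ) : ZMod n) = i := by
  haveI : NeZero n := ⟨by omega⟩
  exact ⟨i.val, i.val_lt, ZMod.natCast_rightInverse i⟩

lemma zmod_neg_one (n : ℕ) (hn : 3 ≤ n) : ((n - 1 : ℕ) : ZMod n) = -1 := by
  haveI : NeZero n := ⟨by omega⟩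
  rw [Nat.cast_sub (by omega)]
  simp

lemma zmod_neg_two (n : ℕ) (hn : 3 ≤ n) : ((n - 2 : ℕ) : ZMod n) = -2 := by
  haveI : NeZero n := ⟨by omega⟩
  rw [Nat.cast_sub (by omega)]
  simp

/-- `e₀` together with the in-range generators, as a function on `ZMod n`. -/
def Et (t4 : ℂ) (n : ℕ) (hn : 3 ≤ n) (i : ZMod n) : TLP t4 n :=
  if h : (ZMod.val i) = 0 then
    RP t4 n * EP t4 n ⟨n - 1, by omega, by omega⟩ * RiP t4 n
  else EP t4 n ⟨i.val, by omega, by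
    haveI : NeZero n := ⟨by omega⟩
    exact i.val_lt⟩

lemma Et_zero (t4 : ℂ) (n : ℕ) (hn : 3 ≤ n) :
    Et t4 n hn 0 = RP t4 n * EP t4 n ⟨n - 1, by omega, by omega⟩ * RiP t4 n := by
  haveI : NeZero n := ⟨by omega⟩
  rw [Et, dif_pos (ZMod.val_zero)]

lemma Et_val (t4 : ℂ) (n : ℕ) (hn : 3 ≤ n) (v : ℕ) (h1 : 1 ≤ v) (h2 : v < n) :
    Et t4 n hn ((v : ℕ) : ZMod n) = EP t4 n ⟨v, h1, h2⟩ := by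
  haveI : NeZero n := ⟨by omega⟩
  have hv : ((v : ℕ) : ZMod n).val = v := ZMod.val_cast_of_lt h2
  rw [Et, dif_neg (by rw [hv]; omega)]
  exact congrArg (EP t4 n) (Subtype.ext hv)

lemma Et_neg_one (t4 : ℂ) (n : ℕ) (hn : 3 ≤ n) :
    Et t4 n hn (-1) = EP t4 n ⟨n - 1, by omega, by omega⟩ := by
  rw [← zmod_neg_one n hn, Et_val t4 n hn (n-1) (by omega) (by omega)]

lemma hkey (t4 : ℂ) (n : ℕ) (hn : 3 ≤ n) (i : ZMod n) :
    RP t4 n * Et t4 n hn i = Et t4 n hn (i + 1) * RP t4 n := by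
  haveI : NeZero n := ⟨by omega⟩
  obtain ⟨v, hv, rfl⟩ := zmod_surj n hn i
  rcases Nat.eq_zero_or_pos v with h0 | hpos
  · subst h0
    rw [Nat.cast_zero, Et_zero t4 n hn,
      show (0 : ZMod n) + 1 = ((1 : ℕ) : ZMod n) by simp,
      Et_val t4 n hn 1 le_rfl (by omega)]
    have hr := Prre t4 n ⟨n-1, by omega, by omega⟩ ⟨1, le_rfl, by omega⟩ rfl rfl
    calc RP t4 n * (RP t4 n * EP t4 n ⟨n-1, by omega, by omega⟩ * RiP t4 n)
        = (RP t4 n * RP t4 n * EP t4 n ⟨n-1, by omega, by omega⟩) * RiP t4 n := by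
          simp only [mul_assoc]
      _ = EP t4 n ⟨1, le_rfl, by omega⟩ * (RP t4 n * RP t4 n) * RiP t4 n := by rw [hr]
      _ = EP t4 n ⟨1, le_rfl, by omega⟩ * RP t4 n := by
          simp only [mul_assoc, Prri, mul_one]
  · rcases eq_or_lt_of_le (Nat.lt_iff_add_one_le.mp hv) with hv1 | hv1
    · -- v = n - 1
      have hv2 : v = n - 1 := by omega
      subst hv2
      rw [zmod_neg_one n hn, Et_neg_one t4 n hn, show (-1 : ZMod n) + 1 = 0 by ring,
        Et_zero t4 n hn]
      simp only [mul_assoc, Prir, mul_one]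
    · -- 1 ≤ v ≤ n - 2
      rw [Et_val t4 n hn v hpos hv,
        show ((v : ℕ) : ZMod n) + 1 = ((v + 1 : ℕ) : ZMod n) by push_cast; ring,
        Et_val t4 n hn (v+1) (by omega) (by omega)]
      exact Prer t4 n ⟨v, hpos, hv⟩ ⟨v+1, by omega, by omega⟩ rfl

lemma Et_up (t4 : ℂ) (n : ℕ) (hn : 3 ≤ n) (i : ZMod n) :
    Et t4 n hn (i + 1) = RP t4 n * Et t4 n hn i * RiP t4 n :=
  conj_up _ _ _ (Prri t4 n) (hkey t4 n hn) i

lemma Et_down (t4 : ℂ) (n : ℕ) (hn : 3 ≤ n) (i : ZMod n) :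
    Et t4 n hn (i - 1) = RiP t4 n * Et t4 n hn i * RP t4 n :=
  conj_down _ _ _ (Prir t4 n) (hkey t4 n hn) i

end EtSec

section EtRels

lemma Et_eq_EP (t4 : ℂ) (n : ℕ) (hn : 3 ≤ n) (i : ZMod n) (h : i.val ≠ 0) (hlt : i.val < n) :
    Et t4 n hn i = EP t4 n ⟨i.val, by omega, hlt⟩ := by
  haveI : NeZero n := ⟨by omega⟩
  conv_lhs => rw [← (ZMod.natCast_rightInverse (n := n) i)]
  exact Et_val t4 n hn i.val (by omega) hlt

lemma sub_eq_one_of (n : ℕ) (hn : 3 ≤ n) (i j : ZMod n) (h : i.val = j.val + 1) :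
    i - j = 1 := by
  haveI : NeZero n := ⟨by omega⟩
  have hi : ((i.val : ℕ) : ZMod n) = i := ZMod.natCast_rightInverse i
  have hj : ((j.val : ℕ) : ZMod n) = j := ZMod.natCast_rightInverse j
  rw [← hi, ← hj, h]
  push_cast
  ring

lemma Et_sq (t4 : ℂ) (n : ℕ) (hn : 3 ≤ n) (i : ZMod n) :
    Et t4 n hn i * Et t4 n hn i = (-(t4 ^ 2 + t4⁻¹ ^ 2)) • Et t4 n hn i := by
  haveI : NeZero n := ⟨by omega⟩
  by_cases h : i.val = 0
  · have hi : i = 0 := by rwa [ZMod.val_eq_zero] at h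
    subst hi
    rw [Et_zero t4 n hn, conj_mul2 _ _ (Prir t4 n), Pesq, mul_smul_comm, smul_mul_assoc]
  · rw [Et_eq_EP t4 n hn i h i.val_lt]
    exact Pesq t4 n _

lemma commEt_in (t4 : ℂ) (n : ℕ) (hn : 3 ≤ n) (i j : ZMod n)
    (hi : i.val ≠ 0) (hj : j.val ≠ 0) (h1 : i - j ≠ 1) (h2 : j - i ≠ 1) :
    Et t4 n hn i * Et t4 n hn j = Et t4 n hn j * Et t4 n hn i := by
  haveI : NeZero n := ⟨by omega⟩
  rw [Et_eq_EP t4 n hn i hi i.val_lt, Et_eq_EP t4 n hn j hj j.val_lt]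
  apply Pcomm
  · exact fun h => h1 (sub_eq_one_of n hn i j h)
  · exact fun h => h2 (sub_eq_one_of n hn j i h)

lemma zmod_val_one (n : ℕ) (hn : 3 ≤ n) : (1 : ZMod n).val = 1 := by
  haveI : NeZero n := ⟨by omega⟩
  rw [show (1 : ZMod n) = ((1 : ℕ) : ZMod n) by simp]
  exact ZMod.val_cast_of_lt (by omega)

lemma zmod_val_two (n : ℕ) (hn : 3 ≤ n) : (2 : ZMod n).val = 2 := by
  haveI : NeZero n := ⟨by omega⟩
  rw [show (2 : ZMod n) = ((2 : ℕ) : ZMod n) by push_cast; ring]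
  exact ZMod.val_cast_of_lt (by omega)

lemma zmod_val_neg_one (n : ℕ) (hn : 3 ≤ n) : (-1 : ZMod n).val = n - 1 := by
  haveI : NeZero n := ⟨by omega⟩
  rw [← zmod_neg_one n hn]
  exact ZMod.val_cast_of_lt (by omega)

lemma zmod_val_neg_two (n : ℕ) (hn : 3 ≤ n) : (-2 : ZMod n).val = n - 2 := by
  haveI : NeZero n := ⟨by omega⟩
  rw [← zmod_neg_two n hn]
  exact ZMod.val_cast_of_lt (by omega)

lemma Et_shift (t4 : ℂ) (n : ℕ) (hn : 3 ≤ n) (i : ZMod n) :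
    Et t4 n hn i = RP t4 n * Et t4 n hn (i - 1) * RiP t4 n := by
  have h := Et_up t4 n hn (i - 1)
  rwa [sub_add_cancel] at h

lemma commEt (t4 : ℂ) (n : ℕ) (hn : 3 ≤ n) (i j : ZMod n)
    (h1 : i - j ≠ 1) (h2 : i - j ≠ -1) :
    Et t4 n hn i * Et t4 n hn j = Et t4 n hn j * Et t4 n hn i := by
  haveI : NeZero n := ⟨by omega⟩
  have h2' : j - i ≠ 1 := fun h => h2 (by rw [show i - j = -(j - i) by ring, h])
  by_cases hij : i = j
  · rw [hij]
  by_cases hz : i.val = 0 ∨ j.val = 0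
  · have hi1 : i ≠ 1 := by
      intro h
      subst h
      rcases hz with h | h
      · rw [zmod_val_one n hn] at h; omega
      · have : j = 0 := by rwa [ZMod.val_eq_zero] at h
        subst this
        exact h1 (by ring)
    have hj1 : j ≠ 1 := by
      intro h
      subst h
      rcases hz with h | h
      · have : i = 0 := by rwa [ZMod.val_eq_zero] at h
        subst this
        exact h2 (by ring)
      · rw [zmod_val_one n hn] at h; omega
    rw [Et_shift t4 n hn i, Et_shift t4 n hn j,
      conj_mul2 _ _ (Prir t4 n), conj_mul2 _ _ (Prir t4 n)]
    congr 2
    apply commEt_in t4 n hn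
    · intro h
      exact hi1 (sub_eq_zero.mp ((ZMod.val_eq_zero _).mp h))
    · intro h
      exact hj1 (sub_eq_zero.mp ((ZMod.val_eq_zero _).mp h))
    · rw [show i - 1 - (j - 1) = i - j by ring]; exact h1
    · rw [show j - 1 - (i - 1) = j - i by ring]; exact h2'
  · push_neg at hz
    exact commEt_in t4 n hn i j hz.1 hz.2 h1 h2'

lemma ebeEt_in (t4 : ℂ) (n : ℕ) (hn : 3 ≤ n) (i j : ZMod n)
    (hi : i.val ≠ 0) (hj : j.val ≠ 0) (h : j.val = i.val + 1 ∨ i.val = j.val + 1) :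
    Et t4 n hn i * Et t4 n hn j * Et t4 n hn i = Et t4 n hn i := by
  haveI : NeZero n := ⟨by omega⟩
  rw [Et_eq_EP t4 n hn i hi i.val_lt, Et_eq_EP t4 n hn j hj j.val_lt]
  exact Pebe t4 n _ _ h

lemma eplusEt (t4 : ℂ) (n : ℕ) (hn : 3 ≤ n) (i : ZMod n) :
    Et t4 n hn i * Et t4 n hn (i + 1) * Et t4 n hn i = Et t4 n hn i := by
  haveI : NeZero n := ⟨by omega⟩
  by_cases h0 : i = 0
  · subst h0
    rw [show (0 : ZMod n) + 1 = 1 by ring]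
    have h := conj_triple' (RP t4 n) (RiP t4 n) (Et t4 n hn) (Prri t4 n) (Prir t4 n)
      (hkey t4 n hn) 1 2
    rw [show (1 : ZMod n) - 1 = 0 by ring, show (2 : ZMod n) - 1 = 1 by ring] at h
    rw [h, ebeEt_in t4 n hn 1 2 (by rw [zmod_val_one n hn]; omega)
      (by rw [zmod_val_two n hn]; omega)
      (Or.inl (by rw [zmod_val_one n hn, zmod_val_two n hn])),
      ← Et_down t4 n hn 1, show (1 : ZMod n) - 1 = 0 by ring]
  by_cases h1 : i = -1
  · subst h1
    rw [show (-1 : ZMod n) + 1 = 0 by ring]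
    have h := conj_triple (RP t4 n) (RiP t4 n) (Et t4 n hn) (Prri t4 n) (Prir t4 n)
      (hkey t4 n hn) (-2) (-1)
    rw [show (-2 : ZMod n) + 1 = -1 by ring, show (-1 : ZMod n) + 1 = 0 by ring] at h
    rw [h, ebeEt_in t4 n hn (-2) (-1) (by rw [zmod_val_neg_two n hn]; omega)
      (by rw [zmod_val_neg_one n hn]; omega)
      (Or.inl (by rw [zmod_val_neg_one n hn, zmod_val_neg_two n hn]; omega)),
      ← Et_up t4 n hn (-2), show (-2 : ZMod n) + 1 = -1 by ring]
  · obtain ⟨v, hv, rfl⟩ := zmod_surj n hn i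
    have hv0 : v ≠ 0 := by
      intro h; subst h; exact h0 (by simp)
    have hvn : v ≠ n - 1 := by
      intro h; subst h; exact h1 (zmod_neg_one n hn)
    rw [show ((v : ℕ) : ZMod n) + 1 = ((v + 1 : ℕ) : ZMod n) by push_cast; ring]
    apply ebeEt_in t4 n hn
    · rw [ZMod.val_cast_of_lt hv]; omega
    · rw [ZMod.val_cast_of_lt (show v + 1 < n by omega)]; omega
    · exact Or.inl (by rw [ZMod.val_cast_of_lt hv,
        ZMod.val_cast_of_lt (show v + 1 < n by omega)])

lemma eminusEt (t4 : ℂ) (n : ℕ) (hn : 3 ≤ n) (i : ZMod n) :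
    Et t4 n hn i * Et t4 n hn (i - 1) * Et t4 n hn i = Et t4 n hn i := by
  haveI : NeZero n := ⟨by omega⟩
  by_cases h0 : i = 0
  · subst h0
    rw [show (0 : ZMod n) - 1 = -1 by ring]
    have h := conj_triple (RP t4 n) (RiP t4 n) (Et t4 n hn) (Prri t4 n) (Prir t4 n)
      (hkey t4 n hn) (-1) (-2)
    rw [show (-1 : ZMod n) + 1 = 0 by ring, show (-2 : ZMod n) + 1 = -1 by ring] at h
    rw [h, ebeEt_in t4 n hn (-1) (-2) (by rw [zmod_val_neg_one n hn]; omega)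
      (by rw [zmod_val_neg_two n hn]; omega)
      (Or.inr (by rw [zmod_val_neg_one n hn, zmod_val_neg_two n hn]; omega)),
      ← Et_up t4 n hn (-1), show (-1 : ZMod n) + 1 = 0 by ring]
  by_cases h1 : i = 1
  · subst h1
    rw [show (1 : ZMod n) - 1 = 0 by ring]
    have h := conj_triple' (RP t4 n) (RiP t4 n) (Et t4 n hn) (Prri t4 n) (Prir t4 n)
      (hkey t4 n hn) 2 1
    rw [show (2 : ZMod n) - 1 = 1 by ring, show (1 : ZMod n) - 1 = 0 by ring] at h
    rw [h, ebeEt_in t4 n hn 2 1 (by rw [zmod_val_two n hn]; omega)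
      (by rw [zmod_val_one n hn]; omega)
      (Or.inr (by rw [zmod_val_one n hn, zmod_val_two n hn])),
      ← Et_down t4 n hn 2, show (2 : ZMod n) - 1 = 1 by ring]
  · obtain ⟨v, hv, rfl⟩ := zmod_surj n hn i
    have hv0 : v ≠ 0 := by
      intro h; subst h; exact h0 (by simp)
    have hv1 : v ≠ 1 := by
      intro h; subst h; exact h1 (by simp)
    rw [show ((v : ℕ) : ZMod n) - 1 = ((v - 1 : ℕ) : ZMod n) by
      rw [Nat.cast_sub (by omega)]; push_cast; ring]
    apply ebeEt_in t4 n hn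
    · rw [ZMod.val_cast_of_lt hv]; omega
    · rw [ZMod.val_cast_of_lt (show v - 1 < n by omega)]; omega
    · exact Or.inr (by rw [ZMod.val_cast_of_lt hv,
        ZMod.val_cast_of_lt (show v - 1 < n by omega)]; omega)

lemma chain_image (t4 : ℂ) (n : ℕ) (hn : 3 ≤ n) :
    RingQuot.mkAlgHom ℂ (TLPrel t4 n) (chainProd n) =
      ((Jc n (-1 : ZMod n) (n - 1)).map (Et t4 n hn)).prod := by
  haveI : NeZero n := ⟨by omega⟩
  rw [chainProd, map_list_prod, List.map_ofFn, ← zmod_neg_one n hn,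
    ← ofFn_eq_Jc (n := n) (n - 1), List.map_ofFn]
  congr 1
  apply congrArg List.ofFn
  funext k
  simp only [Function.comp_apply]
  exact (Et_val t4 n hn ((k : ℕ) + 1) (by omega) (by have := k.isLt; omega)).symm

lemma cycP (t4 : ℂ) (n : ℕ) (hn : 3 ≤ n) :
    (RP t4 n * Et t4 n hn 1) ^ (n - 1) = RP t4 n ^ n * (RP t4 n * Et t4 n hn 1) := by
  apply dir1 (RP t4 n) (RiP t4 n) (Et t4 n hn) hn (Prri t4 n) (Prir t4 n) (hkey t4 n hn)
  rw [Et_neg_one t4 n hn, Pchain t4 n ⟨n - 1, by omega, by omega⟩ rfl, chain_image t4 n hn]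

end EtRels

section Homs

def fFgen (t4 : ℂ) (n : ℕ) (hn : 3 ≤ n) : TLgen n → TLP t4 n
  | .e i => Et t4 n hn i
  | .r => RP t4 n
  | .ri => RiP t4 n

def fGgen (t4 : ℂ) (n : ℕ) : TLPgen n → TL t4 n
  | .e i => E t4 n ((i : ℕ) : ZMod n)
  | .r => R t4 n
  | .ri => Ri t4 n

lemma hFrel (t4 : ℂ) (n : ℕ) (hn : 3 ≤ n) : ∀ ⦃x y : FA n⦄, TLrel t4 n x y →
    (FreeAlgebra.lift ℂ (fFgen t4 n hn)) x = (FreeAlgebra.lift ℂ (fFgen t4 n hn)) y := by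
  intro x y h
  induction h with
  | esq i =>
    simp only [ef, map_mul, map_smul, FreeAlgebra.lift_ι_apply, fFgen]
    exact Et_sq t4 n hn i
  | rer i =>
    simp only [ef, rf, map_mul, FreeAlgebra.lift_ι_apply, fFgen]
    exact hkey t4 n hn i
  | rri =>
    simp only [rf, rif, map_mul, map_one, FreeAlgebra.lift_ι_apply, fFgen]
    exact Prri t4 n
  | rir =>
    simp only [rf, rif, map_mul, map_one, FreeAlgebra.lift_ι_apply, fFgen]
    exact Prir t4 n
  | comm h i j h1 h2 =>
    simp only [ef, map_mul, FreeAlgebra.lift_ι_apply, fFgen]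
    exact commEt t4 n hn i j h1 h2
  | eplus h i =>
    simp only [ef, map_mul, FreeAlgebra.lift_ι_apply, fFgen]
    exact eplusEt t4 n hn i
  | eminus h i =>
    simp only [ef, map_mul, FreeAlgebra.lift_ι_apply, fFgen]
    exact eminusEt t4 n hn i
  | cyc h =>
    simp only [ef, rf, map_mul, map_pow, FreeAlgebra.lift_ι_apply, fFgen]
    exact cycP t4 n hn
  | two h => omega

lemma cast_sub_ne_one (n : ℕ) (hn : 3 ≤ n) (a b : ℕ) (ha : 1 ≤ a) (ha' : a < n)
    (hb : 1 ≤ b) (hb' : b < n) (h : a ≠ b + 1) :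
    ((a : ℕ) : ZMod n) - ((b : ℕ) : ZMod n) ≠ 1 := by
  haveI : NeZero n := ⟨by omega⟩
  intro hc
  have hab : ((a : ℕ) : ZMod n) = ((b + 1 : ℕ) : ZMod n) := by
    push_cast
    linear_combination hc
  rcases eq_or_lt_of_le (show b + 1 ≤ n by omega) with hbn | hbn
  · rw [show ((b + 1 : ℕ) : ZMod n) = 0 by rw [hbn]; simp] at hab
    have := congrArg ZMod.val hab
    rw [ZMod.val_cast_of_lt ha', ZMod.val_zero] at this
    omega
  · have := congrArg ZMod.val hab
    rw [ZMod.val_cast_of_lt ha', ZMod.val_cast_of_lt hbn] at this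
    omega

lemma chain_image_G (t4 : ℂ) (n : ℕ) (hn : 3 ≤ n) :
    (FreeAlgebra.lift ℂ (fGgen t4 n)) (chainProd n) =
      ((Jc n (-1 : ZMod n) (n - 1)).map (E t4 n)).prod := by
  haveI : NeZero n := ⟨by omega⟩
  rw [chainProd, map_list_prod, List.map_ofFn, ← zmod_neg_one n hn,
    ← ofFn_eq_Jc (n := n) (n - 1), List.map_ofFn]
  congr 1
  apply congrArg List.ofFn
  funext k
  simp only [Function.comp_apply, epf, FreeAlgebra.lift_ι_apply, fGgen]

lemma hGrel (t4 : ℂ) (n : ℕ) (hn : 3 ≤ n) : ∀ ⦃x y : FP n⦄, TLPrel t4 n x y →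
    (FreeAlgebra.lift ℂ (fGgen t4 n)) x = (FreeAlgebra.lift ℂ (fGgen t4 n)) y := by
  haveI : NeZero n := ⟨by omega⟩
  intro x y h
  induction h with
  | esq i =>
    simp only [epf, map_mul, map_smul, FreeAlgebra.lift_ι_apply, fGgen]
    exact Tesq t4 n _
  | comm i j h1 h2 =>
    simp only [epf, map_mul, FreeAlgebra.lift_ι_apply, fGgen]
    apply Tcomm t4 n hn
    · exact cast_sub_ne_one n hn i j i.2.1 i.2.2 j.2.1 j.2.2 h1
    · intro hc
      exact cast_sub_ne_one n hn j i j.2.1 j.2.2 i.2.1 i.2.2 h2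
        (by rw [show ((j:ℕ):ZMod n) - ((i:ℕ):ZMod n) = -(((i:ℕ):ZMod n) - ((j:ℕ):ZMod n)) by ring, hc]; ring)
  | ebe i j h =>
    simp only [epf, map_mul, FreeAlgebra.lift_ι_apply, fGgen]
    rcases h with h | h
    · rw [show ((j : ℕ) : ZMod n) = ((i : ℕ) : ZMod n) + 1 by rw [h]; push_cast; ring]
      exact Teplus t4 n hn _
    · rw [show ((j : ℕ) : ZMod n) = ((i : ℕ) : ZMod n) - 1 by rw [h]; push_cast; ring]
      exact Teminus t4 n hn _
  | rer i j h =>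
    simp only [epf, rpf, map_mul, FreeAlgebra.lift_ι_apply, fGgen]
    rw [show ((j : ℕ) : ZMod n) = ((i : ℕ) : ZMod n) + 1 by rw [h]; push_cast; ring]
    exact Trer t4 n _
  | rre i j hi hj =>
    simp only [epf, rpf, map_mul, FreeAlgebra.lift_ι_apply, fGgen]
    rw [show ((i : ℕ) : ZMod n) = -1 by rw [hi]; exact zmod_neg_one n hn,
      show ((j : ℕ) : ZMod n) = 1 by rw [hj]; simp]
    have ha := Trer t4 n (-1 : ZMod n)
    rw [show (-1 : ZMod n) + 1 = 0 by ring] at ha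
    have hb := Trer t4 n (0 : ZMod n)
    rw [show (0 : ZMod n) + 1 = 1 by ring] at hb
    calc R t4 n * R t4 n * E t4 n (-1) = R t4 n * (R t4 n * E t4 n (-1)) := by
          rw [mul_assoc]
      _ = R t4 n * (E t4 n 0 * R t4 n) := by rw [ha]
      _ = (R t4 n * E t4 n 0) * R t4 n := by rw [mul_assoc]
      _ = E t4 n 1 * R t4 n * R t4 n := by rw [hb]
      _ = E t4 n 1 * (R t4 n * R t4 n) := by rw [mul_assoc]
  | rri =>
    simp only [rpf, ripf, map_mul, map_one, FreeAlgebra.lift_ι_apply, fGgen]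
    exact Trri t4 n
  | rir =>
    simp only [rpf, ripf, map_mul, map_one, FreeAlgebra.lift_ι_apply, fGgen]
    exact Trir t4 n
  | chain i hi =>
    rw [chain_image_G t4 n hn]
    simp only [epf, rpf, map_mul, FreeAlgebra.lift_ι_apply, fGgen]
    rw [show ((i : ℕ) : ZMod n) = -1 by rw [hi]; exact zmod_neg_one n hn]
    exact dir2 (R t4 n) (Ri t4 n) (E t4 n) hn (Trri t4 n) (Trir t4 n) (Trer t4 n)
      (Tcyc t4 n hn)

def FF (t4 : ℂ) (n : ℕ) (hn : 3 ≤ n) : TL t4 n →ₐ[ℂ] TLP t4 n :=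
  RingQuot.liftAlgHom ℂ ⟨FreeAlgebra.lift ℂ (fFgen t4 n hn), hFrel t4 n hn⟩

def GG (t4 : ℂ) (n : ℕ) (hn : 3 ≤ n) : TLP t4 n →ₐ[ℂ] TL t4 n :=
  RingQuot.liftAlgHom ℂ ⟨FreeAlgebra.lift ℂ (fGgen t4 n), hGrel t4 n hn⟩

lemma FF_E (t4 : ℂ) (n : ℕ) (hn : 3 ≤ n) (i : ZMod n) :
    FF t4 n hn (E t4 n i) = Et t4 n hn i := by
  rw [E, FF, RingQuot.liftAlgHom_mkAlgHom_apply]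
  simp [ef, fFgen]

lemma FF_R (t4 : ℂ) (n : ℕ) (hn : 3 ≤ n) : FF t4 n hn (R t4 n) = RP t4 n := by
  rw [R, FF, RingQuot.liftAlgHom_mkAlgHom_apply]
  simp [rf, fFgen]

lemma FF_Ri (t4 : ℂ) (n : ℕ) (hn : 3 ≤ n) : FF t4 n hn (Ri t4 n) = RiP t4 n := by
  rw [Ri, FF, RingQuot.liftAlgHom_mkAlgHom_apply]
  simp [rif, fFgen]

lemma GG_EP (t4 : ℂ) (n : ℕ) (hn : 3 ≤ n) (i : {i : ℕ // 1 ≤ i ∧ i < n}) :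
    GG t4 n hn (EP t4 n i) = E t4 n ((i : ℕ) : ZMod n) := by
  rw [EP, GG, RingQuot.liftAlgHom_mkAlgHom_apply]
  simp [epf, fGgen]

lemma GG_RP (t4 : ℂ) (n : ℕ) (hn : 3 ≤ n) : GG t4 n hn (RP t4 n) = R t4 n := by
  rw [RP, GG, RingQuot.liftAlgHom_mkAlgHom_apply]
  simp [rpf, fGgen]

lemma GG_RiP (t4 : ℂ) (n : ℕ) (hn : 3 ≤ n) : GG t4 n hn (RiP t4 n) = Ri t4 n := by
  rw [RiP, GG, RingQuot.liftAlgHom_mkAlgHom_apply]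
  simp [ripf, fGgen]

lemma GG_Et (t4 : ℂ) (n : ℕ) (hn : 3 ≤ n) (i : ZMod n) :
    GG t4 n hn (Et t4 n hn i) = E t4 n i := by
  haveI : NeZero n := ⟨by omega⟩
  by_cases h : i.val = 0
  · have hi : i = 0 := by rwa [ZMod.val_eq_zero] at h
    subst hi
    rw [Et_zero t4 n hn, map_mul, map_mul, GG_RP, GG_RiP, GG_EP]
    rw [show ((n - 1 : ℕ) : ZMod n) = -1 from zmod_neg_one n hn]
    have ha := Trer t4 n (-1 : ZMod n)
    rw [show (-1 : ZMod n) + 1 = 0 by ring] at ha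
    rw [ha, mul_assoc, Trri t4 n, mul_one]
  · rw [Et_eq_EP t4 n hn i h i.val_lt, GG_EP]
    congr
    exact ZMod.natCast_rightInverse i

lemma GG_FF (t4 : ℂ) (n : ℕ) (hn : 3 ≤ n) :
    (GG t4 n hn).comp (FF t4 n hn) = AlgHom.id ℂ (TL t4 n) := by
  apply RingQuot.ringQuot_ext'
  apply FreeAlgebra.hom_ext
  funext x
  cases x with
  | e i =>
    show GG t4 n hn (FF t4 n hn (E t4 n i)) = E t4 n i
    rw [FF_E, GG_Et]
  | r =>
    show GG t4 n hn (FF t4 n hn (R t4 n)) = R t4 n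
    rw [FF_R, GG_RP]
  | ri =>
    show GG t4 n hn (FF t4 n hn (Ri t4 n)) = Ri t4 n
    rw [FF_Ri, GG_RiP]

lemma FF_GG (t4 : ℂ) (n : ℕ) (hn : 3 ≤ n) :
    (FF t4 n hn).comp (GG t4 n hn) = AlgHom.id ℂ (TLP t4 n) := by
  apply RingQuot.ringQuot_ext'
  apply FreeAlgebra.hom_ext
  funext x
  cases x with
  | e i =>
    show FF t4 n hn (GG t4 n hn (EP t4 n i)) = EP t4 n i
    rw [GG_EP, FF_E, Et_val t4 n hn (i : ℕ) i.2.1 i.2.2]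
  | r =>
    show FF t4 n hn (GG t4 n hn (RP t4 n)) = RP t4 n
    rw [GG_RP, FF_R]
  | ri =>
    show FF t4 n hn (GG t4 n hn (RiP t4 n)) = RiP t4 n
    rw [GG_RiP, FF_Ri]

end Homs

/-- for `n ≥ 3` there is a ℂ-algebra isomorphism from `TL_n` onto the
algebra presented on the restricted generators, sending `e_i ↦ e_i` (`1 ≤ i ≤ n-1`),
`ρ ↦ ρ` and `ρ⁻¹ ↦ ρ⁻¹`. -/
theorem statement5 (t4 : ℂ) (ht4 : t4 ≠ 0) (n : ℕ) (hn : 3 ≤ n) :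
    ∃ F : TL t4 n ≃ₐ[ℂ] TLP t4 n,
      (∀ (i : ℕ) (h1 : 1 ≤ i) (h2 : i < n),
        F (E t4 n (i : ZMod n)) = EP t4 n ⟨i, h1, h2⟩) ∧
      F (R t4 n) = RP t4 n ∧ F (Ri t4 n) = RiP t4 n := by
  refine ⟨AlgEquiv.ofAlgHom (FF t4 n hn) (GG t4 n hn) (FF_GG t4 n hn) (GG_FF t4 n hn),
    ?_, ?_, ?_⟩
  · intro i h1 h2
    show FF t4 n hn (E t4 n (i : ZMod n)) = EP t4 n ⟨i, h1, h2⟩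
    rw [FF_E, Et_val t4 n hn i h1 h2]
  · show FF t4 n hn (R t4 n) = RP t4 n
    exact FF_R t4 n hn
  · show FF t4 n hn (Ri t4 n) = RiP t4 n
    exact FF_Ri t4 n hn

end SkeinTL
end
end

section
/- For n ≥ 3, in the algebra TL_n^e the two-sided ideal generated by the element (ρe_1)^{n-1} − ρ^n(ρe_1) equals the two-sided ideal generated by the element ρ^2e_{n-1} − e_1e_2⋯e_{n-1}. -/
noncomputable section

namespace SkeinTL

/-- The defining relations of the algebra `TL_n^e` (for `n ≥ 3`): all the defining
relations of the extended affine Temperley-Lieb algebra except the relation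
`(ρe₁)^{n-1} = ρ^n(ρe₁)`.  Indices are taken modulo `n`. -/
inductive TLerel (t4 : ℂ) (n : ℕ) : FA n → FA n → Prop
  | esq (i : ZMod n) :
      TLerel t4 n (ef n i * ef n i) ((-(t4 ^ 2 + t4⁻¹ ^ 2)) • ef n i)
  | comm (i j : ZMod n) (h1 : i - j ≠ 1) (h2 : i - j ≠ -1) :
      TLerel t4 n (ef n i * ef n j) (ef n j * ef n i)
  | eplus (i : ZMod n) :
      TLerel t4 n (ef n i * ef n (i + 1) * ef n i) (ef n i)
  | eminus (i : ZMod n) :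
      TLerel t4 n (ef n i * ef n (i - 1) * ef n i) (ef n i)
  | rer (i : ZMod n) :
      TLerel t4 n (rf n * ef n i) (ef n (i + 1) * rf n)
  | rri : TLerel t4 n (rf n * rif n) 1
  | rir : TLerel t4 n (rif n * rf n) 1

/-- The algebra `TL_n^e`. -/
abbrev TLe (t4 : ℂ) (n : ℕ) : Type := RingQuot (TLerel t4 n)

def Ee (t4 : ℂ) (n : ℕ) (i : ZMod n) : TLe t4 n :=
  RingQuot.mkAlgHom ℂ (TLerel t4 n) (ef n i)
def Re (t4 : ℂ) (n : ℕ) : TLe t4 n := RingQuot.mkAlgHom ℂ (TLerel t4 n) (rf n)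
def Rie (t4 : ℂ) (n : ℕ) : TLe t4 n := RingQuot.mkAlgHom ℂ (TLerel t4 n) (rif n)
def Cte (t4 : ℂ) (n : ℕ) (c : ℂ) : TLe t4 n := algebraMap ℂ (TLe t4 n) c

section Rel
variable (t4 : ℂ) (n : ℕ)

lemma hRE (i : ZMod n) : Re t4 n * Ee t4 n i = Ee t4 n (i + 1) * Re t4 n := by
  simpa only [map_mul, Re, Ee] using RingQuot.mkAlgHom_rel ℂ (TLerel.rer (t4 := t4) i)

lemma hRRi : Re t4 n * Rie t4 n = 1 := by
  simpa only [map_mul, map_one, Re, Rie] using RingQuot.mkAlgHom_rel ℂ (TLerel.rri (t4 := t4) (n := n))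

lemma hRiR : Rie t4 n * Re t4 n = 1 := by
  simpa only [map_mul, map_one, Re, Rie] using RingQuot.mkAlgHom_rel ℂ (TLerel.rir (t4 := t4) (n := n))


lemma hRE' (i : ZMod n) (x : TLe t4 n) :
    Re t4 n * (Ee t4 n i * x) = Ee t4 n (i + 1) * (Re t4 n * x) := by
  rw [← mul_assoc, hRE, mul_assoc]

lemma hRRi' (x : TLe t4 n) : Re t4 n * (Rie t4 n * x) = x := by
  rw [← mul_assoc, hRRi, one_mul]

lemma hRiR' (x : TLe t4 n) : Rie t4 n * (Re t4 n * x) = x := by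
  rw [← mul_assoc, hRiR, one_mul]

lemma hER' (i : ZMod n) (x : TLe t4 n) :
    Ee t4 n i * (Re t4 n * x) = Re t4 n * (Ee t4 n (i - 1) * x) := by
  rw [hRE' t4 n (i - 1), sub_add_cancel]

lemma hERi' (i : ZMod n) (x : TLe t4 n) :
    Ee t4 n i * (Rie t4 n * x) = Rie t4 n * (Ee t4 n (i + 1) * x) := by
  conv_lhs => rw [← hRiR' t4 n (Ee t4 n i * (Rie t4 n * x))]
  rw [hRE', hRRi']

lemma hpowRi (k : ℕ) (x : TLe t4 n) :
    Re t4 n ^ (k + 1) * (Rie t4 n * x) = Re t4 n ^ k * x := by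
  rw [pow_succ, mul_assoc, hRRi']

lemma hipow (k : ℕ) (x : TLe t4 n) :
    Rie t4 n ^ k * (Re t4 n ^ k * x) = x := by
  induction k generalizing x with
  | zero => simp
  | succ m ih =>
    rw [pow_succ, pow_succ', mul_assoc, mul_assoc, hRiR', ih]

end Rel

/-- `Pl m i = E i * E (i+1) * ⋯ * E (i+m-1)` (right-associated). -/
def Pl (t4 : ℂ) (n : ℕ) : ℕ → ZMod n → TLe t4 n
  | 0, _ => 1
  | m + 1, i => Ee t4 n i * Pl t4 n m (i + 1)

section Rel2
variable (t4 : ℂ) (n : ℕ)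

lemma hPlRi (m : ℕ) (i : ZMod n) (x : TLe t4 n) :
    Pl t4 n m i * (Rie t4 n * x) = Rie t4 n * (Pl t4 n m (i + 1) * x) := by
  induction m generalizing i x with
  | zero => simp [Pl]
  | succ m ih =>
    simp only [Pl, mul_assoc]
    rw [ih, hERi']

lemma hPlR (m : ℕ) (i : ZMod n) (x : TLe t4 n) :
    Pl t4 n m i * (Re t4 n * x) = Re t4 n * (Pl t4 n m (i - 1) * x) := by
  induction m generalizing i x with
  | zero => simp [Pl]
  | succ m ih =>
    simp only [Pl, mul_assoc]
    rw [ih, hER', show i + 1 - 1 = i from by ring, show i - 1 + 1 = i from by ring]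

lemma hPlApp (m : ℕ) (i : ZMod n) :
    Pl t4 n (m + 1) i = Pl t4 n m i * Ee t4 n (i + (m : ZMod n)) := by
  induction m generalizing i with
  | zero => simp [Pl]
  | succ m ih =>
    rw [Pl, ih, Pl, mul_assoc]
    congr 2
    push_cast
    ring

lemma hPow (k : ℕ) :
    (Re t4 n * Ee t4 n 1) ^ k = Re t4 n ^ k * Pl t4 n k (2 - (k : ZMod n)) := by
  induction k with
  | zero => simp [Pl]
  | succ m ih =>
    rw [pow_succ, ih, pow_succ]
    simp only [mul_assoc]
    rw [hPlR]
    congr 2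
    have h1 : (2 : ZMod n) - (m : ZMod n) - 1 = 1 - (m : ZMod n) := by ring
    have h2 : (2 : ZMod n) - ((m + 1 : ℕ) : ZMod n) = 1 - (m : ZMod n) := by push_cast; ring
    rw [h1, h2, hPlApp, show (1 : ZMod n) - (m : ZMod n) + (m : ZMod n) = 1 from by ring]

lemma hlist (m : ℕ) (i : ZMod n) :
    (List.ofFn (fun j : Fin m => Ee t4 n (i + (j : ℕ)))).prod = Pl t4 n m i := by
  induction m generalizing i with
  | zero => simp [Pl]
  | succ m ih =>
    rw [List.ofFn_succ, List.prod_cons]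
    have ht : (List.ofFn fun j : Fin m => Ee t4 n (i + (((j.succ : Fin (m + 1)) : ℕ) : ZMod n))) =
        (List.ofFn fun j : Fin m => Ee t4 n ((i + 1) + ((j : ℕ) : ZMod n))) := by
      refine congrArg List.ofFn (funext fun j => ?_)
      congr 1
      push_cast [Fin.val_succ]
      ring
    rw [ht, ih, Pl]
    congr 2
    simp

end Rel2

/-- The two-sided ideal of a ring generated by a set: the smallest two-sided ideal
containing the set. -/
def tsSpan {R : Type*} [NonUnitalNonAssocRing R] (s : Set R) : TwoSidedIdeal R :=
  sInf {I : TwoSidedIdeal R | s ⊆ I}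

lemma tsSpan_singleton_le {A : Type*} [Ring A] {u v : A} (a b : A) (h : u = -(a * v * b)) :
    tsSpan {u} ≤ tsSpan {v} := by
  have hu : u ∈ tsSpan {v} := by
    rw [tsSpan, TwoSidedIdeal.mem_sInf]
    intro I hI
    have hv : v ∈ I := hI (Set.mem_singleton v)
    rw [h]
    exact I.neg_mem (I.mul_mem_right _ _ (I.mul_mem_left _ _ hv))
  exact sInf_le (by simpa [Set.singleton_subset_iff] using hu)

section Main
variable (t4 : ℂ) (n : ℕ)

lemma hPlRi1 (m : ℕ) (i : ZMod n) :
    Pl t4 n m i * Rie t4 n = Rie t4 n * Pl t4 n m (i + 1) := by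
  simpa using hPlRi t4 n m i 1

lemma hERi1 (i : ZMod n) : Ee t4 n i * Rie t4 n = Rie t4 n * Ee t4 n (i + 1) := by
  simpa using hERi' t4 n i 1

lemma hER1 (i : ZMod n) : Ee t4 n i * Re t4 n = Re t4 n * Ee t4 n (i - 1) := by
  simpa using hER' t4 n i 1

lemma hPlR1 (m : ℕ) (i : ZMod n) :
    Pl t4 n m i * Re t4 n = Re t4 n * Pl t4 n m (i - 1) := by
  simpa using hPlR t4 n m i 1

lemma hpowR (k : ℕ) (x : TLe t4 n) :
    Re t4 n ^ k * (Re t4 n * x) = Re t4 n ^ (k + 1) * x := by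
  rw [pow_succ, mul_assoc]

lemma key1_s6 (hn : 3 ≤ n) :
    (Re t4 n * Ee t4 n 1) ^ (n - 1) - Re t4 n ^ n * (Re t4 n * Ee t4 n 1) =
    -(Re t4 n ^ (n + 1) *
      (Re t4 n * Re t4 n * Ee t4 n ((n - 1 : ℕ) : ZMod n) - Pl t4 n (n - 1) 1) *
      (Rie t4 n * Rie t4 n)) := by
  have hn1 : n - 1 + 1 = n := by omega
  have hc : ((n - 1 : ℕ) : ZMod n) = -1 := by
    rw [Nat.cast_sub (by omega : 1 ≤ n), Nat.cast_one, ZMod.natCast_self]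
    ring
  rw [mul_sub, sub_mul, neg_sub]
  congr 1
  · -- (R E₁)^{n-1} = R^{n+1} * Pl (n-1) 1 * (Ri * Ri)
    rw [hPow, show (2 : ZMod n) - ((n - 1 : ℕ) : ZMod n) = 3 from by rw [hc]; ring]
    have hp : ∀ x : TLe t4 n, Re t4 n ^ n * (Rie t4 n * x) = Re t4 n ^ (n - 1) * x := by
      intro x
      have := hpowRi t4 n (n - 1) x
      rwa [hn1] at this
    rw [mul_assoc, hPlRi t4 n (n - 1) 1 (Rie t4 n), hPlRi1, hpowRi, hp,
      show (1 : ZMod n) + 1 + 1 = 3 from by norm_num]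
  · -- R^n * (R * E 1) = R^{n+1} * (R * R * E (-1)) * (Ri * Ri)
    rw [hc]
    simp only [mul_assoc]
    rw [hERi' t4 n (-1) (Rie t4 n), hERi1, hRRi', hRRi']
    rw [show (-1 : ZMod n) + 1 + 1 = 1 from by ring, ← mul_assoc, ← pow_succ]

lemma key2_s6 (hn : 3 ≤ n) :
    Re t4 n * Re t4 n * Ee t4 n ((n - 1 : ℕ) : ZMod n) - Pl t4 n (n - 1) 1 =
    -(Rie t4 n ^ (n + 1) *
      ((Re t4 n * Ee t4 n 1) ^ (n - 1) - Re t4 n ^ n * (Re t4 n * Ee t4 n 1)) *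
      (Re t4 n * Re t4 n)) := by
  have hn1 : n - 1 + 1 = n := by omega
  have hc : ((n - 1 : ℕ) : ZMod n) = -1 := by
    rw [Nat.cast_sub (by omega : 1 ≤ n), Nat.cast_one, ZMod.natCast_self]
    ring
  rw [mul_sub, sub_mul, neg_sub]
  congr 1
  · rw [hc]
    simp only [mul_assoc]
    rw [hER' t4 n 1 (Re t4 n), hER1, show (1 : ZMod n) - 1 = 0 from by ring,
      show (0 : ZMod n) - 1 = -1 from by ring, hpowR, hipow]
  · have hp := hPow t4 n (n - 1)
    rw [show (2 : ZMod n) - ((n - 1 : ℕ) : ZMod n) = 3 from by rw [hc]; ring] at hp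
    rw [hp]
    simp only [mul_assoc]
    rw [hPlR t4 n (n - 1) 3 (Re t4 n), hPlR1,
      show (3 : ZMod n) - 1 = 2 from by ring, show (2 : ZMod n) - 1 = 1 from by ring,
      hpowR, hn1, hpowR, hipow]

end Main

/-- in `TL_n^e` (`n ≥ 3`), the two-sided ideal generated by
`(ρe₁)^{n-1} − ρ^n(ρe₁)` equals the two-sided ideal generated by
`ρ²e_{n-1} − e₁e₂⋯e_{n-1}`. -/
theorem statement6 (t4 : ℂ) (ht4 : t4 ≠ 0) (n : ℕ) (hn : 3 ≤ n) :
    tsSpan {((Re t4 n * Ee t4 n 1) ^ (n - 1) - Re t4 n ^ n * (Re t4 n * Ee t4 n 1) :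
        TLe t4 n)} =
    tsSpan {(Re t4 n * Re t4 n * Ee t4 n ((n - 1 : ℕ) : ZMod n) -
        (List.ofFn (fun k : Fin (n - 1) =>
          Ee t4 n (((k : ℕ) + 1 : ℕ) : ZMod n))).prod : TLe t4 n)} := by
  have hQ : (List.ofFn (fun k : Fin (n - 1) => Ee t4 n (((k : ℕ) + 1 : ℕ) : ZMod n))).prod
      = Pl t4 n (n - 1) 1 := by
    rw [← hlist]
    refine congrArg List.prod (congrArg List.ofFn (funext fun j => ?_))
    congr 1
    push_cast
    ring
  rw [hQ]
  exact le_antisymm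
    (tsSpan_singleton_le _ _ (key1_s6 t4 n hn))
    (tsSpan_singleton_le _ _ (key2_s6 t4 n hn))


end SkeinTL
end
end
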